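/- arXiv:1107.2876 — 9 statements merged into one kernel-verified Lean document; each statement's English description precedes it below -/
import Mathlib

section
/- Let λ_α, λ_β > 0 and for each k ∈ ℕ define p̂_k(t) = Σ_{r=0}^∞ e^{−λ_α r} (λ_α r)^k / k! · e^{−λ_β t} (λ_β t)^r / r! for t > 0. Then for every t > 0 and every k ∈ ℕ, the function t ↦ p̂_k(t) is differentiable at t and satisfies the difference-differential equation d/dt p̂_k(t) = −λ_β p̂_k(t) + λ_β e^{−λ_α} Σ_{m=0}^{k} (λ_α^m / m!) · p̂_{k−m}(t). -/
open Real

/-- The state probabilities of the iterated Poisson process `N̂(t) = N_α(N_β(t))`. -/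
noncomputable def iterPoissonPMF (lα lβ t : ℝ) (k : ℕ) : ℝ :=
  ∑' r : ℕ, Real.exp (-lα * r) * (lα * r) ^ k / (Nat.factorial k) *
    (Real.exp (-lβ * t) * (lβ * t) ^ r / (Nat.factorial r))

/-!
With `a_r = Pr{N_α(r) = k}` we have `p̂_k(t) = e^{-λ_β t} G(λ_β t)`, where `G(x) = Σ_r a_r x^r / r!`
is the exponential generating function of `(a_r)`. Since `|a_r| ≤ e^{2|λ_α| r}` grows at most
exponentially, `G` is entire and `G' = Σ_r a_{r+1} x^r / r!`, so the product rule gives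
`p̂_k' = -λ_β p̂_k + λ_β e^{-λ_β t} Σ_r a_{r+1} (λ_β t)^r / r!`. Finally `N_α(r + 1)` is the sum of the
independent `N_α(1)` and `N_α(r)`, so `a_{r+1} = Σ_m e^{-λ_α} λ_α^m / m! · Pr{N_α(r) = k - m}`,
and summing over `r` turns the last series into `e^{-λ_α} Σ_m λ_α^m / m! · p̂_{k-m}(t)`.
-/

open Nat Finset

noncomputable def expGenFun (a : ℕ → ℝ) (x : ℝ) : ℝ := ∑' n, a n * x ^ n / n !

section expGenFun

variable {a : ℕ → ℝ} {C D : ℝ}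

theorem norm_mul_pow_div_factorial_le {b c y R : ℝ} (hb : |b| ≤ c) (hy : |y| ≤ R) (n : ℕ) :
    ‖(b * y ^ n / n !)‖ ≤ c * R ^ n / n ! := by
  rw [norm_div, norm_mul, norm_pow, Real.norm_natCast, Real.norm_eq_abs, Real.norm_eq_abs]
  gcongr
  exact (abs_nonneg b).trans hb

theorem summable_mul_pow_div_factorial (ha : ∀ n, |a n| ≤ C * D ^ n) (x : ℝ) :
    Summable fun n => a n * x ^ n / n ! := by
  refine .of_norm_bounded ((summable_pow_div_factorial (D * |x|)).mul_left C) fun n =>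
    (norm_mul_pow_div_factorial_le (ha n) le_rfl n).trans_eq ?_
  ring

theorem hasDerivAt_expGenFun (ha : ∀ n, |a n| ≤ C * D ^ n) (x : ℝ) :
    HasDerivAt (expGenFun a) (expGenFun (fun n => a (n + 1)) x) x := by
  have hsplit : expGenFun a = fun y => a 0 + ∑' n, a (n + 1) * y ^ (n + 1) / (n + 1)! := by
    ext y
    rw [expGenFun, (summable_mul_pow_div_factorial ha y).tsum_eq_zero_add]
    simp
  have hterm (n : ℕ) (y : ℝ) :
      HasDerivAt (fun y => a (n + 1) * y ^ (n + 1) / (n + 1)!) (a (n + 1) * y ^ n / n !) y := by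
    refine (((hasDerivAt_pow (n + 1) y).const_mul (a (n + 1))).div_const _).congr_deriv ?_
    rw [factorial_succ]
    push_cast
    field_simp
  have hbound (n : ℕ) (y : ℝ) (hy : y ∈ Metric.ball 0 (|x| + 1)) :
      ‖(a (n + 1) * y ^ n / n !)‖ ≤ C * D * ((D * (|x| + 1)) ^ n / n !) := by
    rw [mem_ball_zero_iff, Real.norm_eq_abs] at hy
    refine (norm_mul_pow_div_factorial_le (ha (n + 1)) hy.le n).trans_eq ?_
    rw [mul_pow, pow_succ]
    ring
  rw [hsplit]
  refine (hasDerivAt_tsum_of_isPreconnected ((summable_pow_div_factorial _).mul_left (C * D))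
    Metric.isOpen_ball (convex_ball _ _).isPreconnected (fun n y _ => hterm n y) hbound
    (Metric.mem_ball_self (by positivity)) ?_ ?_).const_add (a 0)
  · exact (summable_nat_add_iff 1).mpr (summable_mul_pow_div_factorial ha 0)
  · simp

theorem expGenFun_sum_mul {ι : Type*} (s : Finset ι) (c : ι → ℝ) (b : ι → ℕ → ℝ) {x : ℝ}
    (hb : ∀ i ∈ s, Summable fun n => b i n * x ^ n / n !) :
    expGenFun (fun n => ∑ i ∈ s, c i * b i n) x = ∑ i ∈ s, c i * expGenFun (b i) x := by
  have hterm (n : ℕ) :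
      (∑ i ∈ s, c i * b i n) * x ^ n / n ! = ∑ i ∈ s, c i * (b i n * x ^ n / n !) := by
    rw [sum_mul, sum_div]
    exact sum_congr rfl fun i _ => by ring
  simp only [expGenFun, hterm]
  rw [Summable.tsum_finsetSum fun i hi => (hb i hi).mul_left (c i)]
  exact sum_congr rfl fun i _ => tsum_mul_left

theorem hasDerivAt_exp_neg_mul_expGenFun (ha : ∀ n, |a n| ≤ C * D ^ n) (β t : ℝ) :
    HasDerivAt (fun s => exp (-β * s) * expGenFun a (β * s))
      (-β * (exp (-β * t) * expGenFun a (β * t)) +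
        β * (exp (-β * t) * expGenFun (fun n => a (n + 1)) (β * t))) t := by
  have hexp := ((hasDerivAt_id' t).const_mul (-β)).exp
  have hgen := (hasDerivAt_expGenFun ha (β * t)).comp t ((hasDerivAt_id' t).const_mul β)
  exact (hexp.mul hgen).congr_deriv (by rw [Function.comp_apply]; ring)

end expGenFun

theorem add_pow_div_factorial {K : Type*} [Field K] [CharZero K] (x y : K) (k : ℕ) :
    (x + y) ^ k / k ! = ∑ m ∈ range (k + 1), x ^ m / m ! * (y ^ (k - m) / (k - m)!) := by
  rw [add_pow, sum_div]
  refine sum_congr rfl fun m hm => ?_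
  have hmk : m ≤ k := Nat.lt_succ_iff.mp (mem_range.mp hm)
  have hchoose : (k.choose m : K) ≠ 0 := by exact_mod_cast (choose_pos hmk).ne'
  rw [← choose_mul_factorial_mul_factorial hmk]
  push_cast
  field_simp

-- Mathlib's `poissonPMFReal` only takes a rate in `ℝ≥0`.
noncomputable def poissonTerm (μ : ℝ) (k : ℕ) : ℝ := exp (-μ) * μ ^ k / k !

theorem poissonTerm_add (μ ν : ℝ) (k : ℕ) :
    poissonTerm (μ + ν) k = ∑ m ∈ range (k + 1), poissonTerm μ m * poissonTerm ν (k - m) := by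
  simp only [poissonTerm, mul_div_assoc, add_pow_div_factorial, mul_sum, neg_add, exp_add]
  exact sum_congr rfl fun m _ => by ring

theorem abs_poissonTerm_le (μ : ℝ) (k : ℕ) : |poissonTerm μ k| ≤ exp (2 * |μ|) := by
  rw [poissonTerm, mul_div_assoc, abs_mul, abs_exp, abs_div, abs_pow, Nat.abs_cast, two_mul,
    exp_add]
  gcongr
  · exact neg_le_abs μ
  · exact pow_div_factorial_le_exp _ (abs_nonneg μ) k

theorem iterPoissonPMF_eq_exp_mul_expGenFun (lα lβ t : ℝ) (k : ℕ) :
    iterPoissonPMF lα lβ t k =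
      exp (-lβ * t) * expGenFun (fun r => poissonTerm (lα * r) k) (lβ * t) := by
  rw [iterPoissonPMF, expGenFun, ← tsum_mul_left]
  refine tsum_congr fun r => ?_
  simp only [poissonTerm, neg_mul]
  ring

theorem iterated_poisson_dde_general (lα lβ : ℝ) (t : ℝ) (k : ℕ) :
    HasDerivAt (fun s => iterPoissonPMF lα lβ s k)
      (-lβ * iterPoissonPMF lα lβ t k +
        lβ * Real.exp (-lα) *
          ∑ m ∈ Finset.range (k + 1), lα ^ m / (Nat.factorial m) *
            iterPoissonPMF lα lβ t (k - m)) t := by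
  have hgrowth (j r : ℕ) : |poissonTerm (lα * r) j| ≤ 1 * exp (2 * |lα|) ^ r := by
    refine (abs_poissonTerm_le _ j).trans_eq ?_
    rw [one_mul, ← exp_nat_mul, abs_mul, Nat.abs_cast]
    ring_nf
  have hshift : (fun r : ℕ => poissonTerm (lα * (r + 1 : ℕ)) k) = fun r : ℕ =>
      ∑ m ∈ range (k + 1), poissonTerm lα m * poissonTerm (lα * r) (k - m) := by
    ext r
    rw [← poissonTerm_add]
    push_cast
    ring_nf
  simp only [iterPoissonPMF_eq_exp_mul_expGenFun]
  refine (hasDerivAt_exp_neg_mul_expGenFun (hgrowth k) lβ t).congr_deriv ?_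
  rw [hshift, expGenFun_sum_mul _ _ _ fun m _ => summable_mul_pow_div_factorial (hgrowth _) _]
  simp only [poissonTerm, mul_sum]
  exact congrArg _ (sum_congr rfl fun m _ => by ring)

/-- the state probabilities `p̂_k(t)` of the iterated Poisson process
satisfy the difference-differential equations
`d/dt p̂_k(t) = −λ_β p̂_k(t) + λ_β e^{−λ_α} Σ_{m=0}^{k} (λ_α^m / m!) p̂_{k−m}(t)`. -/
theorem iterated_poisson_dde (lα lβ : ℝ) (hα : 0 < lα) (hβ : 0 < lβ) (t : ℝ) (ht : 0 < t)
    (k : ℕ) :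
    HasDerivAt (fun s => iterPoissonPMF lα lβ s k)
      (-lβ * iterPoissonPMF lα lβ t k +
        lβ * Real.exp (-lα) *
          ∑ m ∈ Finset.range (k + 1), lα ^ m / (Nat.factorial m) *
            iterPoissonPMF lα lβ t (k - m)) t :=
  iterated_poisson_dde_general lα lβ t k
end

section
/- Let λ_α > 0 and let k ≥ 1 be an integer. Then e^{−λ_α} · (λ_α^k / k!) · Σ_{j=0}^∞ e^{−λ_α j} ((j+1)^k − j^k) < 1. Consequently the first-passage time T_k = inf{s : N_α(N_β(s)) = k} of the iterated Poisson process at level k satisfies Pr{T_k < ∞} < 1, i.e. there is a positive probability of never hitting level k. -/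
/-!
Write `r = e^{-λ}`. Abel summation against `r ^ j` turns the quantity into `(1 - r) A_k`, where
`A_k = Σ_m Pr{Pois(m λ) = k}`. Splitting `Pois((m + 1) λ)` as `Pois(m λ) + Pois(λ)` gives the
renewal equation `u_k = Σ_{i<k} q_{k-i} u_i` for `u_k = (1 - r) A_k`, with `u_0 = 1` and
`q_j = Pr{Pois(λ) = j} / (1 - r)`. Since a Poisson law charges every level, the partial sums of
`q` stay strictly below `1`, so by strong induction `u_k < 1` for `k ≥ 1`.
-/

open Real Finset Nat

noncomputable def poissonMass (l : ℝ) (n : ℕ) : ℝ := exp (-l) * l ^ n / n !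

/-- The expected number of integer times `m` at which a rate-`l` Poisson process sits at `k`. -/
noncomputable def poissonOccupation (l : ℝ) (k : ℕ) : ℝ := ∑' m : ℕ, poissonMass (m * l) k

lemma poissonMass_pos {l : ℝ} (hl : 0 < l) (n : ℕ) : 0 < poissonMass l n := by
  unfold poissonMass; positivity

lemma poissonMass_zero_right (l : ℝ) : poissonMass l 0 = exp (-l) := by
  simp [poissonMass]

lemma hasSum_poissonMass {l : ℝ} (hl : 0 ≤ l) : HasSum (poissonMass l) 1 :=
  ProbabilityTheory.hasSum_one_poissonMeasure ⟨l, hl⟩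

lemma poissonMass_add (a b : ℝ) (n : ℕ) :
    poissonMass (a + b) n = ∑ i ∈ range (n + 1), poissonMass a i * poissonMass b (n - i) := by
  simp only [poissonMass, neg_add, exp_add, add_pow, mul_sum, sum_div]
  refine sum_congr rfl fun i hi => ?_
  have hin : i ≤ n := Nat.lt_succ_iff.mp (mem_range.mp hi)
  rw [← Nat.choose_mul_factorial_mul_factorial hin]
  have : (n.choose i : ℝ) ≠ 0 := cast_ne_zero.mpr (choose_pos hin).ne'
  push_cast
  field_simp

lemma sum_range_poissonMass_lt_one {l : ℝ} (hl : 0 < l) (n : ℕ) :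
    ∑ i ∈ range n, poissonMass l i < 1 :=
  calc ∑ i ∈ range n, poissonMass l i
      < ∑ i ∈ range (n + 1), poissonMass l i := by
        rw [sum_range_succ]; linarith [poissonMass_pos hl n]
    _ ≤ 1 := sum_le_hasSum _ (fun i _ => (poissonMass_pos hl i).le) (hasSum_poissonMass hl.le)

lemma sum_range_poissonMass_sub_lt {l : ℝ} (hl : 0 < l) (k : ℕ) :
    ∑ i ∈ range k, poissonMass l (k - i) < 1 - exp (-l) := by
  have hreflect : ∑ i ∈ range k, poissonMass l (k - i) = ∑ j ∈ range k, poissonMass l (j + 1) := by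
    rw [← sum_range_reflect]
    refine sum_congr rfl fun i hi => ?_
    have := mem_range.mp hi
    congr 1
    omega
  have := sum_range_poissonMass_lt_one hl (k + 1)
  rw [sum_range_succ', poissonMass_zero_right] at this
  linarith

lemma poissonMass_nat_mul (l : ℝ) (m k : ℕ) :
    poissonMass (m * l) k = l ^ k / k ! * ((m : ℝ) ^ k * exp (-l) ^ m) := by
  rw [poissonMass, ← exp_nat_mul, mul_pow]
  ring_nf

lemma summable_poissonMass_nat_mul {l : ℝ} (hl : 0 < l) (k : ℕ) :
    Summable fun m : ℕ => poissonMass (m * l) k := by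
  have hr : ‖exp (-l)‖ < 1 := by
    rw [norm_of_nonneg (exp_pos _).le, exp_lt_one_iff]; linarith
  simpa only [poissonMass_nat_mul] using
    (summable_pow_mul_geometric_of_norm_lt_one k hr).mul_left (l ^ k / k !)

lemma poissonOccupation_eq (l : ℝ) (k : ℕ) :
    poissonOccupation l k = l ^ k / k ! * ∑' m : ℕ, (m : ℝ) ^ k * exp (-l) ^ m := by
  simp only [poissonOccupation, poissonMass_nat_mul, tsum_mul_left]

lemma one_sub_exp_neg_mul_poissonOccupation_zero {l : ℝ} (hl : 0 < l) :
    (1 - exp (-l)) * poissonOccupation l 0 = 1 := by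
  have hr : exp (-l) < 1 := by rw [exp_lt_one_iff]; linarith
  rw [poissonOccupation_eq]
  simp only [pow_zero, one_mul, factorial_zero, cast_one, div_one]
  rw [tsum_geometric_of_lt_one (exp_pos _).le hr, mul_inv_cancel₀ (sub_ne_zero.mpr hr.ne')]

/-- Split `Pois((m + 1) l)` as `Pois(m l) + Pois(l)`; the `m = 0` term vanishes as `k ≠ 0`. -/
lemma poissonOccupation_renewal {l : ℝ} (hl : 0 < l) {k : ℕ} (hk : k ≠ 0) :
    poissonOccupation l k =
      ∑ i ∈ range (k + 1), poissonMass l (k - i) * poissonOccupation l i := by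
  have hshift : poissonOccupation l k = ∑' m : ℕ, poissonMass (m * l + l) k := by
    rw [poissonOccupation, (summable_poissonMass_nat_mul hl k).tsum_eq_zero_add]
    simp [poissonMass, zero_pow hk, add_mul]
  rw [hshift]
  simp only [poissonMass_add, poissonOccupation, ← tsum_mul_left]
  rw [Summable.tsum_finsetSum fun i _ => (summable_poissonMass_nat_mul hl i).mul_right _]
  exact sum_congr rfl fun i _ => tsum_congr fun m => mul_comm _ _

lemma renewal_lt_one {u q : ℕ → ℝ} (hq : ∀ j, 0 ≤ q j)
    (hq_lt : ∀ k, k ≠ 0 → ∑ i ∈ range k, q (k - i) < 1) (hu₀ : u 0 ≤ 1)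
    (hu : ∀ k, k ≠ 0 → u k = ∑ i ∈ range k, q (k - i) * u i) {k : ℕ} (hk : k ≠ 0) :
    u k < 1 := by
  have hbound : ∀ n, n ≠ 0 → (∀ i < n, u i ≤ 1) → u n ≤ ∑ i ∈ range n, q (n - i) := by
    intro n hn hle
    rw [hu n hn]
    exact sum_le_sum fun i hi =>
      mul_le_of_le_one_right (hq _) (hle i (mem_range.mp hi))
  have hle : ∀ k, u k ≤ 1 := by
    intro n
    induction n using Nat.strong_induction_on with
    | _ n ih =>
      rcases eq_or_ne n 0 with rfl | hn
      · exact hu₀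
      · exact (hbound n hn ih).trans (hq_lt n hn).le
  exact (hbound k hk fun i _ => hle i).trans_lt (hq_lt k hk)

lemma one_sub_exp_neg_mul_poissonOccupation_lt_one {l : ℝ} (hl : 0 < l) {k : ℕ} (hk : k ≠ 0) :
    (1 - exp (-l)) * poissonOccupation l k < 1 := by
  have hc : 0 < 1 - exp (-l) := by
    rw [sub_pos, exp_lt_one_iff]; linarith
  refine renewal_lt_one (u := fun k => (1 - exp (-l)) * poissonOccupation l k)
    (q := fun j => poissonMass l j / (1 - exp (-l)))
    (fun j => div_nonneg (poissonMass_pos hl j).le hc.le) (fun k _ => ?_)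
    (one_sub_exp_neg_mul_poissonOccupation_zero hl).le (fun k hk => ?_) hk
  · rw [← sum_div, div_lt_one hc]
    exact sum_range_poissonMass_sub_lt hl k
  · have h := poissonOccupation_renewal hl hk
    rw [sum_range_succ, Nat.sub_self, poissonMass_zero_right] at h
    have hcancel : ∀ i, poissonMass l (k - i) / (1 - exp (-l)) * ((1 - exp (-l)) *
        poissonOccupation l i) = poissonMass l (k - i) * poissonOccupation l i := fun i => by
      field_simp
    simp only [hcancel]
    linarith

lemma summable_succ_pow_mul_geometric {x : ℝ} (hx : ‖x‖ < 1) (k : ℕ) :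
    Summable fun j : ℕ => ((j : ℝ) + 1) ^ k * x ^ j := by
  simp only [add_pow, one_pow, mul_one, sum_mul]
  exact summable_sum fun i _ =>
    ((summable_pow_mul_geometric_of_norm_lt_one i hx).mul_left (k.choose i : ℝ)).congr
      fun j => by ring

lemma mul_tsum_geometric_mul_succ_pow_sub_pow {x : ℝ} (hx : ‖x‖ < 1) {k : ℕ} (hk : k ≠ 0) :
    x * ∑' j : ℕ, x ^ j * (((j : ℝ) + 1) ^ k - (j : ℝ) ^ k) =
      (1 - x) * ∑' j : ℕ, (j : ℝ) ^ k * x ^ j := by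
  have hs := summable_pow_mul_geometric_of_norm_lt_one k hx
  have hshift : x * ∑' j : ℕ, ((j : ℝ) + 1) ^ k * x ^ j = ∑' j : ℕ, (j : ℝ) ^ k * x ^ j := by
    rw [hs.tsum_eq_zero_add, ← tsum_mul_left]
    simp only [cast_zero, zero_pow hk, zero_mul, zero_add, cast_add, cast_one, pow_succ]
    exact tsum_congr fun j => by ring
  have hsplit : ∑' j : ℕ, x ^ j * (((j : ℝ) + 1) ^ k - (j : ℝ) ^ k) =
      ∑' j : ℕ, ((j : ℝ) + 1) ^ k * x ^ j - ∑' j : ℕ, (j : ℝ) ^ k * x ^ j := by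
    rw [← (summable_succ_pow_mul_geometric hx k).tsum_sub hs]
    exact tsum_congr fun j => by ring
  rw [hsplit, mul_sub, hshift]
  ring

/-- `Pr{T_k < ∞} = e^{−λ_α} (λ_α^k/k!) Σ_{j=0}^∞ e^{−λ_α j}((j+1)^k − j^k) < 1`,
so the first-passage time of the iterated Poisson process at level `k ≥ 1` is infinite
with positive probability. -/
theorem iterated_poisson_hitting_defective (lα : ℝ) (hα : 0 < lα) (k : ℕ) (hk : 1 ≤ k) :
    Real.exp (-lα) * (lα ^ k / (Nat.factorial k)) *
      ∑' j : ℕ, Real.exp (-lα * j) * (((j : ℝ) + 1) ^ k - (j : ℝ) ^ k) < 1 := by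
  have hk₀ : k ≠ 0 := one_le_iff_ne_zero.mp hk
  have hx : ‖exp (-lα)‖ < 1 := by
    rw [norm_of_nonneg (exp_pos _).le, exp_lt_one_iff]; linarith
  have hgeom : ∀ j : ℕ, exp (-lα * j) = exp (-lα) ^ j := fun j => by
    rw [← exp_nat_mul, mul_comm]
  calc exp (-lα) * (lα ^ k / k !) * ∑' j : ℕ, exp (-lα * j) * (((j : ℝ) + 1) ^ k - (j : ℝ) ^ k)
      = lα ^ k / k ! * (exp (-lα) *
          ∑' j : ℕ, exp (-lα) ^ j * (((j : ℝ) + 1) ^ k - (j : ℝ) ^ k)) := by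
        simp only [hgeom]; ring
    _ = (1 - exp (-lα)) * poissonOccupation lα k := by
        rw [mul_tsum_geometric_mul_succ_pow_sub_pow hx hk₀, poissonOccupation_eq]; ring
    _ < 1 := one_sub_exp_neg_mul_poissonOccupation_lt_one hα hk₀
end

section
/- Let ν ∈ (0,1], λ_β > 0, k ≥ 1 an integer, and μ > 0 with μ^ν > λ_β. Then the Laplace transform of the first-passage time density of the fractional Poisson process equals ∫_0^∞ e^{−μ s} · λ_β^k Σ_{j=0}^∞ (−1)^j C(k+j−1, j) λ_β^j · s^{ν(k+j)−1} / Γ(ν(k+j)) ds = (μ^ν/λ_β + 1)^{−k}. -/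
/-!
Expanding the density termwise, each term is a Gamma density up to a constant, whose Laplace
transform at `μ` is `μ ^ (-ν (k + j))`. The resulting series is the negative binomial expansion
of `(μ ^ ν + lβ) ^ (-k)` in powers of `lβ / μ ^ ν`, which converges absolutely because
`lβ < μ ^ ν`; this absolute convergence is also what lets the integral and the sum commute.
-/

open Real MeasureTheory Set

section NegativeBinomial

variable {𝕜 : Type*} [NormedField 𝕜]

theorem hasSum_neg_one_pow_mul_choose_mul_pow {x : 𝕜} (hx : ‖x‖ < 1) (k : ℕ) :
    HasSum (fun j : ℕ => (-1) ^ j * ((k + j - 1).choose j : 𝕜) * x ^ j)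
      ((1 + x) ^ (-(k : ℤ))) := by
  cases k with
  | zero =>
    -- `k + j - 1` truncates to `j - 1`, and `(j - 1).choose j = 0` for `j ≥ 1`
    convert hasSum_ite_eq (0 : ℕ) (1 : 𝕜) with j
    · cases j <;> simp
    · simp
  | succ m =>
    convert hasSum_choose_mul_geometric_of_norm_lt_one m (r := -x) (by rwa [norm_neg]) using 1
    · ext j
      rw [show m + 1 + j - 1 = j + m by omega, Nat.choose_symm_add, neg_pow]
      ring
    · rw [sub_neg_eq_add, zpow_neg, one_div, zpow_natCast]

theorem hasSum_neg_one_pow_mul_choose_mul_pow_div_pow {a b : 𝕜} (hab : ‖b‖ < ‖a‖) (k : ℕ) :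
    HasSum (fun j : ℕ => (-1) ^ j * ((k + j - 1).choose j : 𝕜) * b ^ j / a ^ (k + j))
      ((a + b) ^ (-(k : ℤ))) := by
  have ha : a ≠ 0 := norm_pos_iff.mp ((norm_nonneg b).trans_lt hab)
  have hx : ‖b / a‖ < 1 := by rwa [norm_div, div_lt_one ((norm_nonneg b).trans_lt hab)]
  have hsum : (a + b) ^ (-(k : ℤ)) = (a ^ k)⁻¹ * (1 + b / a) ^ (-(k : ℤ)) := by
    rw [← zpow_natCast, ← zpow_neg, ← mul_zpow, mul_add, mul_one, mul_div_cancel₀ _ ha]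
  rw [hsum, funext fun j => show (-1) ^ j * ((k + j - 1).choose j : 𝕜) * b ^ j / a ^ (k + j) =
      (a ^ k)⁻¹ * ((-1) ^ j * ((k + j - 1).choose j : 𝕜) * (b / a) ^ j) by
    rw [div_pow, pow_add]; field_simp]
  exact (hasSum_neg_one_pow_mul_choose_mul_pow hx k).mul_left _

end NegativeBinomial

theorem integrableOn_exp_neg_mul_mul_rpow {μ a : ℝ} (hμ : 0 < μ) (ha : 0 < a) :
    IntegrableOn (fun s : ℝ => exp (-μ * s) * s ^ (a - 1)) (Ioi 0) := by
  simpa [mul_comm] using integrableOn_rpow_mul_exp_neg_mul_rpow (p := 1) (by linarith) one_pos hμ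

theorem integral_exp_neg_mul_mul_rpow_div_Gamma {μ a : ℝ} (hμ : 0 < μ) (ha : 0 < a) :
    ∫ s in Ioi 0, exp (-μ * s) * s ^ (a - 1) / Gamma a = (μ ^ a)⁻¹ := by
  have := integral_rpow_mul_exp_neg_mul_Ioi ha hμ
  simp_rw [integral_div, mul_comm (exp _), neg_mul, this, one_div, inv_rpow hμ.le]
  field_simp [(Gamma_pos_of_pos ha).ne']

theorem integral_exp_neg_mul_mul_tsum_rpow_div_Gamma {μ : ℝ} (hμ : 0 < μ) {a c : ℕ → ℝ}
    (ha : ∀ j, 0 < a j) (hc : Summable fun j => c j / μ ^ a j) :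
    ∫ s in Ioi 0, exp (-μ * s) * ∑' j, c j * s ^ (a j - 1) / Gamma (a j) =
      ∑' j, c j / μ ^ a j := by
  set F : ℕ → ℝ → ℝ := fun j s => c j * (exp (-μ * s) * s ^ (a j - 1) / Gamma (a j))
  have hF_int : ∀ j, Integrable (F j) (volume.restrict (Ioi 0)) := fun j =>
    ((integrableOn_exp_neg_mul_mul_rpow hμ (ha j)).div_const _).const_mul _
  have hF_norm : ∀ j, ∫ s in Ioi 0, ‖F j s‖ = |c j / μ ^ a j| := by
    intro j
    rw [abs_div, abs_of_pos (rpow_pos_of_pos hμ _), div_eq_mul_inv,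
      ← integral_exp_neg_mul_mul_rpow_div_Gamma hμ (ha j), ← integral_const_mul]
    refine setIntegral_congr_fun measurableSet_Ioi fun s hs => ?_
    have : 0 ≤ exp (-μ * s) * s ^ (a j - 1) / Gamma (a j) :=
      div_nonneg (mul_nonneg (exp_nonneg _) (rpow_nonneg hs.le _)) (Gamma_pos_of_pos (ha j)).le
    rw [norm_mul, Real.norm_eq_abs, Real.norm_eq_abs, abs_of_nonneg this]
  have hF_tsum : ∀ s, exp (-μ * s) * ∑' j, c j * s ^ (a j - 1) / Gamma (a j) = ∑' j, F j s := by
    intro s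
    rw [← tsum_mul_left]
    exact tsum_congr fun j => by simp only [F]; ring
  simp_rw [hF_tsum]
  rw [← integral_tsum_of_summable_integral_norm hF_int (by simpa only [hF_norm] using hc.abs)]
  refine tsum_congr fun j => ?_
  rw [integral_const_mul, integral_exp_neg_mul_mul_rpow_div_Gamma hμ (ha j), div_eq_mul_inv]

/-- the Laplace transform of the first-passage time density of the
fractional Poisson process:
`∫_0^∞ e^{−μs} λ_β^k Σ_j (−1)^j C(k+j−1,j) λ_β^j s^{ν(k+j)−1}/Γ(ν(k+j)) ds
 = (μ^ν/λ_β + 1)^{−k}`. -/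
theorem laplace_fractional_poisson_hitting (ν lβ μ : ℝ) (hν : ν ∈ Set.Ioc (0 : ℝ) 1)
    (hβ : 0 < lβ) (k : ℕ) (hk : 1 ≤ k) (hμ : 0 < μ) (hcond : lβ < μ ^ ν) :
    ∫ s in Set.Ioi (0 : ℝ), Real.exp (-μ * s) *
      (lβ ^ k * ∑' j : ℕ, (-1 : ℝ) ^ j * ((k + j - 1).choose j : ℝ) * lβ ^ j *
        s ^ (ν * ((k : ℝ) + j) - 1) / Real.Gamma (ν * ((k : ℝ) + j))) =
    (μ ^ ν / lβ + 1) ^ (-(k : ℤ)) := by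
  have hμν : 0 < μ ^ ν := rpow_pos_of_pos hμ ν
  have hseries := hasSum_neg_one_pow_mul_choose_mul_pow_div_pow
    (a := μ ^ ν) (b := lβ) (by rwa [Real.norm_of_nonneg hβ.le, Real.norm_of_nonneg hμν.le]) k
  simp_rw [← rpow_mul_natCast hμ.le] at hseries
  push_cast at hseries
  calc _ = lβ ^ k * ∫ s in Ioi 0, exp (-μ * s) *
        ∑' j : ℕ, (-1 : ℝ) ^ j * ((k + j - 1).choose j : ℝ) * lβ ^ j *
          s ^ (ν * ((k : ℝ) + j) - 1) / Gamma (ν * ((k : ℝ) + j)) := by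
        simp_rw [mul_left_comm _ (lβ ^ k)]
        exact integral_const_mul _ _
    _ = lβ ^ k * (μ ^ ν + lβ) ^ (-(k : ℤ)) := by
        have hexp (j : ℕ) : 0 < ν * ((k : ℝ) + j) :=
          mul_pos hν.1 (add_pos_of_pos_of_nonneg (Nat.cast_pos.mpr hk) j.cast_nonneg)
        rw [integral_exp_neg_mul_mul_tsum_rpow_div_Gamma hμ hexp hseries.summable,
          hseries.tsum_eq]
    _ = (μ ^ ν / lβ + 1) ^ (-(k : ℤ)) := by
        rw [div_add_one hβ.ne', div_zpow, zpow_neg, zpow_neg, div_inv_eq_mul, zpow_natCast,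
          zpow_natCast, mul_comm]
end

section
/- Let ν ∈ (0,1], λ_α, λ_β > 0 with λ_β < λ_α^ν, and let k ≥ 1, r ≥ 0 be integers. Then ∫_0^∞ e^{−λ_α s} (λ_α s)^r / r! · λ_β^k Σ_{j=0}^∞ (−1)^j C(k+j−1, j) λ_β^j s^{ν(k+j)−1} / Γ(ν(k+j)) ds = (1/r!) Σ_{j=0}^∞ (−1)^j C(k+j−1, j) (λ_β/λ_α^ν)^{k+j} · Γ(ν(k+j)+r) / Γ(ν(k+j)); that is, the composition Ñ^ν(k) = N_α(τ_k^ν) of a homogeneous Poisson process with the first-passage time of an independent fractional Poisson process has distribution Pr{Ñ^ν(k) = r} given by the right-hand side. -/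
open Real MeasureTheory Set

/-! Expanding the density `f_k^ν` as a power series in `λ_β`, the integral becomes a series of
Gamma integrals `∫₀^∞ s^(a-1) e^(-λ_α s) ds = Γ(a) / λ_α^a` with `a = ν(k+j) + r`.  Integral and
series may be interchanged because the series of absolute values is dominated by
`C(k+j-1, j) x^(k+j) Γ(ν(k+j)+r) / Γ(ν(k+j))` with `x = λ_β / λ_α^ν < 1`, a polynomial in `j`
times a convergent geometric series. -/

lemma Nat.choose_add_sub_one_le_pow (k j : ℕ) : (k + j - 1).choose j ≤ (k + j) ^ (k - 1) := by
  cases k with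
  | zero => rcases j with _ | j <;> simp
  | succ m =>
    calc (m + 1 + j - 1).choose j = (m + j).choose m := by
          rw [Nat.add_right_comm, Nat.add_sub_cancel, Nat.choose_symm_add]
      _ ≤ (m + j) ^ m := Nat.choose_le_pow _ _
      _ ≤ (m + 1 + j) ^ (m + 1 - 1) := by
          rw [Nat.add_sub_cancel]; exact Nat.pow_le_pow_left (by omega) _

lemma Real.Gamma_add_nat_le_pow_mul_Gamma {a : ℝ} (ha : 0 < a) (n : ℕ) :
    Gamma (a + n) ≤ (a + n) ^ n * Gamma a := by
  induction n with
  | zero => simp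
  | succ n ih =>
    calc Gamma (a + (n + 1 : ℕ)) = (a + n) * Gamma (a + n) := by
          rw [Nat.cast_succ, ← add_assoc, Gamma_add_one (by positivity)]
      _ ≤ (a + n) * ((a + n) ^ n * Gamma a) := by gcongr
      _ ≤ (a + (n + 1 : ℕ)) ^ (n + 1) * Gamma a := by
          rw [← mul_assoc, ← pow_succ']; push_cast; gcongr; linarith

lemma summable_norm_choose_mul_pow_mul_Gamma_div_Gamma {ν x : ℝ} (hν : 0 < ν) (hx : ‖x‖ < 1)
    {k : ℕ} (hk : 1 ≤ k) (r : ℕ) :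
    Summable fun j : ℕ => ‖(-1 : ℝ) ^ j * ((k + j - 1).choose j : ℝ) * x ^ (k + j) *
      Gamma (ν * ((k : ℝ) + j) + r) / Gamma (ν * ((k : ℝ) + j))‖ := by
  have h_geom : Summable fun n : ℕ => (n : ℝ) ^ (k - 1 + r) * ‖x‖ ^ n :=
    summable_pow_mul_geometric_of_norm_lt_one _ (by rwa [norm_norm])
  have h_major := ((summable_nat_add_iff k).2 h_geom).mul_left ((ν + r) ^ r)
  refine Summable.of_nonneg_of_le (fun j => norm_nonneg _) (fun j => ?_) h_major
  have hp : 0 < ν * ((k : ℝ) + j) := by positivity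
  have hkj : (1 : ℝ) ≤ k + j := by norm_cast; omega
  have h_choose : ((k + j - 1).choose j : ℝ) ≤ ((k + j : ℕ) : ℝ) ^ (k - 1) := by
    exact_mod_cast Nat.choose_add_sub_one_le_pow k j
  have h_Gamma : Gamma (ν * ((k : ℝ) + j) + r) / Gamma (ν * ((k : ℝ) + j))
      ≤ (ν + r) ^ r * ((k + j : ℕ) : ℝ) ^ r := by
    refine ((div_le_iff₀ (Gamma_pos_of_pos hp)).2 (Gamma_add_nat_le_pow_mul_Gamma hp r)).trans ?_
    rw [← mul_pow]; push_cast; gcongr; nlinarith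
  calc ‖(-1 : ℝ) ^ j * ((k + j - 1).choose j : ℝ) * x ^ (k + j) *
        Gamma (ν * ((k : ℝ) + j) + r) / Gamma (ν * ((k : ℝ) + j))‖
      = ((k + j - 1).choose j : ℝ) * ‖x‖ ^ (k + j) *
          (Gamma (ν * ((k : ℝ) + j) + r) / Gamma (ν * ((k : ℝ) + j))) := by
        rw [norm_div, norm_mul, norm_mul, norm_mul, norm_pow, norm_pow, norm_neg, norm_one, one_pow,
          one_mul, Real.norm_natCast, norm_of_nonneg (Gamma_pos_of_pos hp).le,
          norm_of_nonneg (Gamma_pos_of_pos (by positivity)).le, mul_div_assoc]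
    _ ≤ ((k + j : ℕ) : ℝ) ^ (k - 1) * ‖x‖ ^ (k + j) * ((ν + r) ^ r * ((k + j : ℕ) : ℝ) ^ r) := by
        gcongr
    _ = (ν + r) ^ r * (((j + k : ℕ) : ℝ) ^ (k - 1 + r) * ‖x‖ ^ (j + k)) := by
        rw [add_comm j k, pow_add _ (k - 1) r]; ring

lemma integrableOn_rpow_mul_exp_neg_mul_Ioi {a b : ℝ} (ha : 0 < a) (hb : 0 < b) :
    IntegrableOn (fun t : ℝ => t ^ (a - 1) * exp (-(b * t))) (Ioi 0) :=
  Integrable.of_integral_ne_zero (by rw [integral_rpow_mul_exp_neg_mul_Ioi ha hb]; positivity)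

theorem integral_tsum_mul_rpow_mul_exp_neg_mul {b : ℝ} (hb : 0 < b) {a c : ℕ → ℝ}
    (ha : ∀ j, 0 < a j) (hc : Summable fun j => ‖c j * ((1 / b) ^ a j * Gamma (a j))‖) :
    ∫ t in Ioi 0, ∑' j, c j * (t ^ (a j - 1) * exp (-(b * t)))
      = ∑' j, c j * ((1 / b) ^ a j * Gamma (a j)) := by
  have h_norm : ∀ j, ∫ t in Ioi 0, ‖c j * (t ^ (a j - 1) * exp (-(b * t)))‖
      = ‖c j * ((1 / b) ^ a j * Gamma (a j))‖ := fun j => by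
    have := ha j
    rw [norm_mul, norm_of_nonneg (r := (1 / b) ^ a j * Gamma (a j)) (by positivity),
      ← integral_rpow_mul_exp_neg_mul_Ioi (ha j) hb, ← integral_const_mul]
    refine setIntegral_congr_fun measurableSet_Ioi fun t (ht : 0 < t) => ?_
    rw [norm_mul, norm_of_nonneg (r := t ^ (a j - 1) * exp (-(b * t))) (by positivity)]
  rw [← integral_tsum_of_summable_integral_norm
    (fun j => (integrableOn_rpow_mul_exp_neg_mul_Ioi (ha j) hb).const_mul (c j))
    (by simpa only [h_norm] using hc)]
  simp_rw [integral_const_mul, integral_rpow_mul_exp_neg_mul_Ioi (ha _) hb]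

theorem integral_exp_mul_pow_div_factorial_mul_tsum_mul_rpow {b : ℝ} (hb : 0 < b) {a c : ℕ → ℝ}
    (ha : ∀ j, 0 < a j) (r : ℕ) (hc : Summable fun j => ‖c j * Gamma (a j + r) / b ^ a j‖) :
    ∫ s in Ioi 0, exp (-b * s) * (b * s) ^ r / r.factorial * ∑' j, c j * s ^ (a j - 1)
      = 1 / (r.factorial : ℝ) * ∑' j, c j * Gamma (a j + r) / b ^ a j := by
  have h_integrand : ∀ s ∈ Ioi (0 : ℝ),
      exp (-b * s) * (b * s) ^ r / r.factorial * ∑' j, c j * s ^ (a j - 1)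
        = ∑' j, b ^ r / r.factorial * c j * (s ^ (a j + r - 1) * exp (-(b * s))) :=
    fun s (hs : 0 < s) => by
      rw [← tsum_mul_left]
      refine tsum_congr fun j => ?_
      rw [show a j + r - 1 = a j - 1 + r by ring, rpow_add hs, rpow_natCast, neg_mul]
      ring
  have h_term : ∀ j, b ^ r / r.factorial * c j * ((1 / b) ^ (a j + r) * Gamma (a j + r))
      = 1 / (r.factorial : ℝ) * (c j * Gamma (a j + r) / b ^ a j) := fun j => by
    rw [one_div, inv_rpow hb.le, rpow_add hb, rpow_natCast]
    field_simp
  rw [setIntegral_congr_fun measurableSet_Ioi h_integrand,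
    integral_tsum_mul_rpow_mul_exp_neg_mul hb (fun j => by have := ha j; positivity)
      (by simpa only [h_term, norm_mul] using hc.mul_left _),
    tsum_congr h_term, tsum_mul_left]

/-- the distribution of the composition `Ñ^ν(k) = N_α(τ_k^ν)` of a Poisson
process with the first-passage time of an independent fractional Poisson process:
`∫_0^∞ e^{−λ_α s}(λ_α s)^r/r! · f_k^ν(s) ds
 = (1/r!) Σ_j (−1)^j C(k+j−1,j) (λ_β/λ_α^ν)^{k+j} Γ(ν(k+j)+r)/Γ(ν(k+j))`. -/
theorem poisson_at_fractional_hitting_distribution (ν lα lβ : ℝ)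
    (hν : ν ∈ Set.Ioc (0 : ℝ) 1) (hα : 0 < lα) (hβ : 0 < lβ) (hcond : lβ < lα ^ ν)
    (k r : ℕ) (hk : 1 ≤ k) :
    ∫ s in Set.Ioi (0 : ℝ), Real.exp (-lα * s) * (lα * s) ^ r / (Nat.factorial r) *
      (lβ ^ k * ∑' j : ℕ, (-1 : ℝ) ^ j * ((k + j - 1).choose j : ℝ) * lβ ^ j *
        s ^ (ν * ((k : ℝ) + j) - 1) / Real.Gamma (ν * ((k : ℝ) + j))) =
    (1 / (Nat.factorial r : ℝ)) *
      ∑' j : ℕ, (-1 : ℝ) ^ j * ((k + j - 1).choose j : ℝ) * (lβ / lα ^ ν) ^ (k + j) *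
        Real.Gamma (ν * ((k : ℝ) + j) + r) / Real.Gamma (ν * ((k : ℝ) + j)) := by
  have h_series : ∀ s : ℝ, lβ ^ k * ∑' j : ℕ, (-1 : ℝ) ^ j * ((k + j - 1).choose j : ℝ) * lβ ^ j *
      s ^ (ν * ((k : ℝ) + j) - 1) / Gamma (ν * ((k : ℝ) + j))
      = ∑' j : ℕ, (-1 : ℝ) ^ j * ((k + j - 1).choose j : ℝ) * lβ ^ (k + j) /
          Gamma (ν * ((k : ℝ) + j)) * s ^ (ν * ((k : ℝ) + j) - 1) := fun s => by
    rw [← tsum_mul_left]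
    exact tsum_congr fun j => by rw [pow_add]; ring
  have h_term : ∀ j : ℕ, (-1 : ℝ) ^ j * ((k + j - 1).choose j : ℝ) * lβ ^ (k + j) /
      Gamma (ν * ((k : ℝ) + j)) * Gamma (ν * ((k : ℝ) + j) + r) / lα ^ (ν * ((k : ℝ) + j))
      = (-1 : ℝ) ^ j * ((k + j - 1).choose j : ℝ) * (lβ / lα ^ ν) ^ (k + j) *
          Gamma (ν * ((k : ℝ) + j) + r) / Gamma (ν * ((k : ℝ) + j)) := fun j => by
    rw [div_pow, ← rpow_natCast (lα ^ ν), ← rpow_mul hα.le]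
    push_cast
    ring
  have hx : ‖lβ / lα ^ ν‖ < 1 := by
    rw [norm_of_nonneg (by positivity)]; exact (div_lt_one (by positivity)).2 hcond
  simp only [h_series]
  have h_summable := summable_norm_choose_mul_pow_mul_Gamma_div_Gamma hν.1 hx hk r
  rw [integral_exp_mul_pow_div_factorial_mul_tsum_mul_rpow hα
    (fun j => by have := hν.1; positivity) r (by simpa only [h_term] using h_summable)]
  simp only [h_term]
end

section
/- Let ν ∈ (0,1], λ_α, λ_β > 0 with λ_β < λ_α^ν, and let k ≥ 1, r ≥ 1 be integers. Then the distribution of the Yule–Furry process Y_α subordinated to the first-passage time τ_k^ν satisfies ∫_0^∞ e^{−λ_α s} (1 − e^{−λ_α s})^{r−1} · λ_β^k Σ_{j=0}^∞ (−1)^j C(k+j−1, j) λ_β^j s^{ν(k+j)−1}/Γ(ν(k+j)) ds = Σ_{h=1}^{r} C(r−1, h−1) (−1)^{h−1} (1 + h^ν · λ_α^ν/λ_β)^{−k}. -/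
/-!
Expanding `(1 - e^{-λ_α s})^{r-1}` binomially turns the left-hand side into a signed combination
of Laplace transforms of `f_k^ν` at the points `h λ_α`, `1 ≤ h ≤ r`. Since
`∫₀^∞ e^{-as} s^{p-1} / Γ(p) ds = a^{-p}`, integrating the series of `f_k^ν` termwise gives
`λ_β^k Σ_j C(k+j-1, j) (-λ_β)^j a^{-ν(k+j)}`, a negative binomial series with sum
`(1 + a^ν / λ_β)^{-k}`. Termwise integration is legitimate because the series of absolute values
converges, which is exactly the condition `λ_β < a^ν`.
-/

open Real MeasureTheory Set Finset

theorem integrable_tsum_of_summable_integral_norm {α E ι : Type*} [MeasurableSpace α]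
    {μ : Measure α} [NormedAddCommGroup E] [CompleteSpace E] [SecondCountableTopology E]
    [MeasurableSpace E] [BorelSpace E] [Countable ι] {F : ι → α → E}
    (hF_int : ∀ i, Integrable (F i) μ) (hF_sum : Summable fun i ↦ ∫ a, ‖F i a‖ ∂μ) :
    Integrable (fun a ↦ ∑' i, F i a) μ := by
  refine ⟨(AEMeasurable.tsum fun i ↦ (hF_int i).aemeasurable).aestronglyMeasurable, ?_⟩
  calc ∫⁻ a, ‖∑' i, F i a‖ₑ ∂μ ≤ ∫⁻ a, ∑' i, ‖F i a‖ₑ ∂μ :=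
        lintegral_mono fun _ ↦ enorm_tsum_le_tsum_enorm
    _ = ∑' i, ENNReal.ofReal (∫ a, ‖F i a‖ ∂μ) := by
        rw [lintegral_tsum fun i ↦ (hF_int i).aemeasurable.enorm]
        simp_rw [ofReal_integral_norm_eq_lintegral_enorm (hF_int _)]
    _ < ⊤ := by
        rw [← ENNReal.ofReal_tsum_of_nonneg (fun i ↦ integral_nonneg fun _ ↦ norm_nonneg _) hF_sum]
        exact ENNReal.ofReal_lt_top

theorem hasSum_choose_add_sub_one_mul_pow (k : ℕ) {t : ℝ} (ht : |t| < 1) :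
    HasSum (fun j : ℕ ↦ ((k + j - 1).choose j : ℝ) * t ^ j) (1 / (1 - t) ^ k) := by
  rcases k with _ | m
  · convert hasSum_ite_eq 0 (1 : ℝ) using 1
    · ext j
      rcases j with _ | j <;> simp
    · simp
  · have hchoose (j : ℕ) : (m + 1 + j - 1).choose j = (j + m).choose m := by
      rw [show m + 1 + j - 1 = j + m by omega, Nat.choose_symm_add]
    simpa only [hchoose] using
      hasSum_choose_mul_geometric_of_norm_lt_one m (r := t) (by rwa [Real.norm_eq_abs])

theorem exp_neg_mul_one_sub_exp_neg_pow (x : ℝ) (n : ℕ) :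
    exp (-x) * (1 - exp (-x)) ^ n =
      ∑ i ∈ range (n + 1), (n.choose i : ℝ) * (-1) ^ i * exp (-((i + 1) * x)) := by
  rw [sub_eq_neg_add, add_pow, mul_sum]
  refine sum_congr rfl fun i _ ↦ ?_
  have hexp : exp (-((i + 1) * x)) = exp (-x) ^ i * exp (-x) := by
    rw [← exp_nat_mul, ← exp_add]
    ring_nf
  rw [hexp, neg_pow, one_pow]
  ring

theorem integrableOn_exp_neg_mul_mul_rpow_sub_one {a p : ℝ} (ha : 0 < a) (hp : 0 < p) (c : ℝ) :
    IntegrableOn (fun s ↦ exp (-(a * s)) * (c * s ^ (p - 1) / Gamma p)) (Ioi 0) := by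
  have h := (integrableOn_rpow_mul_exp_neg_mul_rpow (s := p - 1) (by linarith) one_pos ha).const_mul
    (c / Gamma p)
  refine IntegrableOn.congr_fun h (fun s _ ↦ ?_) measurableSet_Ioi
  simp only [rpow_one, neg_mul]
  ring

theorem integral_exp_neg_mul_mul_rpow_sub_one {a p : ℝ} (ha : 0 < a) (hp : 0 < p) (c : ℝ) :
    ∫ s in Ioi 0, exp (-(a * s)) * (c * s ^ (p - 1) / Gamma p) = c * (a ^ p)⁻¹ := by
  have hΓ : Gamma p ≠ 0 := (Gamma_pos_of_pos hp).ne'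
  calc ∫ s in Ioi 0, exp (-(a * s)) * (c * s ^ (p - 1) / Gamma p)
      = c / Gamma p * ∫ s in Ioi 0, s ^ (p - 1) * exp (-(a * s)) := by
        rw [← integral_const_mul]
        congr 1 with s
        ring
    _ = c * (a ^ p)⁻¹ := by
        rw [integral_rpow_mul_exp_neg_mul_Ioi hp ha, one_div, inv_rpow ha.le]
        field_simp

theorem integrableOn_and_integral_exp_neg_mul_mul_tsum_rpow {a : ℝ} (ha : 0 < a) {c p : ℕ → ℝ}
    (hp : ∀ j, 0 < p j) (hc : Summable fun j ↦ |c j| * (a ^ p j)⁻¹) :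
    IntegrableOn (fun s ↦ exp (-(a * s)) * ∑' j, c j * s ^ (p j - 1) / Gamma (p j)) (Ioi 0) ∧
      ∫ s in Ioi 0, exp (-(a * s)) * ∑' j, c j * s ^ (p j - 1) / Gamma (p j) =
        ∑' j, c j * (a ^ p j)⁻¹ := by
  set F : ℕ → ℝ → ℝ := fun j s ↦ exp (-(a * s)) * (c j * s ^ (p j - 1) / Gamma (p j))
  have hF_int (j : ℕ) : IntegrableOn (F j) (Ioi 0) :=
    integrableOn_exp_neg_mul_mul_rpow_sub_one ha (hp j) (c j)
  have hF_norm (j : ℕ) : ∫ s in Ioi 0, ‖F j s‖ = |c j| * (a ^ p j)⁻¹ := by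
    rw [← integral_exp_neg_mul_mul_rpow_sub_one ha (hp j) |c j|]
    refine setIntegral_congr_fun measurableSet_Ioi fun s (hs : 0 < s) ↦ ?_
    have hΓ := Gamma_pos_of_pos (hp j)
    simp only [F, norm_mul, norm_div, Real.norm_eq_abs, abs_exp, abs_of_pos hΓ,
      abs_of_nonneg (rpow_nonneg hs.le _)]
  have hF_sum : Summable fun j ↦ ∫ s in Ioi 0, ‖F j s‖ := by simpa only [hF_norm] using hc
  simp_rw [← tsum_mul_left]
  refine ⟨integrable_tsum_of_summable_integral_norm hF_int hF_sum, ?_⟩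
  rw [← integral_tsum_of_summable_integral_norm hF_int hF_sum]
  exact tsum_congr fun j ↦ integral_exp_neg_mul_mul_rpow_sub_one ha (hp j) (c j)

noncomputable def fracPoissonHittingDensity (ν lβ : ℝ) (k : ℕ) (s : ℝ) : ℝ :=
  lβ ^ k * ∑' j : ℕ, (-1 : ℝ) ^ j * ((k + j - 1).choose j : ℝ) * lβ ^ j *
    s ^ (ν * ((k : ℝ) + j) - 1) / Gamma (ν * ((k : ℝ) + j))

theorem integrableOn_and_integral_exp_neg_mul_mul_fracPoissonHittingDensity {ν lβ a : ℝ} {k : ℕ}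
    (hν : 0 < ν) (hβ : 0 < lβ) (ha : 0 < a) (hβa : lβ < a ^ ν) (hk : 1 ≤ k) :
    IntegrableOn (fun s ↦ exp (-(a * s)) * fracPoissonHittingDensity ν lβ k s) (Ioi 0) ∧
      ∫ s in Ioi 0, exp (-(a * s)) * fracPoissonHittingDensity ν lβ k s =
        (1 + a ^ ν / lβ) ^ (-(k : ℤ)) := by
  set w := (a ^ ν)⁻¹
  have hw : 0 < w := inv_pos.2 (rpow_pos_of_pos ha ν)
  have hβw : lβ * w < 1 := by rwa [mul_inv_lt_iff₀ (rpow_pos_of_pos ha ν), one_mul]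
  have hpos (j : ℕ) : 0 < ν * ((k : ℝ) + j) := by positivity
  have hinv (j : ℕ) : (a ^ (ν * ((k : ℝ) + j)))⁻¹ = w ^ k * w ^ j := by
    rw [rpow_mul ha.le, ← pow_add, ← Nat.cast_add, rpow_natCast, inv_pow]
  have hsummable : Summable fun j : ℕ ↦
      |(-1 : ℝ) ^ j * ((k + j - 1).choose j : ℝ) * lβ ^ j| * (a ^ (ν * ((k : ℝ) + j)))⁻¹ := by
    refine ((hasSum_choose_add_sub_one_mul_pow k (t := lβ * w) ?_).summable.mul_left
      (w ^ k)).congr fun j ↦ ?_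
    · rwa [abs_of_pos (by positivity)]
    · rw [hinv, abs_mul, abs_mul, abs_pow, abs_neg, abs_one, one_pow, Nat.abs_cast,
        abs_of_pos (pow_pos hβ j)]
      ring
  have hsum := (hasSum_choose_add_sub_one_mul_pow k (t := -(lβ * w)) (by
    rwa [abs_neg, abs_of_pos (by positivity)])).mul_left (w ^ k)
  have hterm (j : ℕ) : (-1 : ℝ) ^ j * ((k + j - 1).choose j : ℝ) * lβ ^ j *
      (a ^ (ν * ((k : ℝ) + j)))⁻¹ = w ^ k * ((k + j - 1).choose j * (-(lβ * w)) ^ j) := by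
    rw [hinv]
    ring
  obtain ⟨hint, heq⟩ := integrableOn_and_integral_exp_neg_mul_mul_tsum_rpow ha hpos hsummable
  simp only [fracPoissonHittingDensity, mul_left_comm (exp _) (lβ ^ k)]
  refine ⟨hint.const_mul _, ?_⟩
  rw [integral_const_mul, heq, tsum_congr hterm, hsum.tsum_eq,
    zpow_neg, zpow_natCast, show a ^ ν = w⁻¹ from (inv_inv _).symm]
  have hsplit : 1 + w⁻¹ / lβ = (1 + lβ * w) / (lβ * w) := by
    field_simp
    ring
  rw [hsplit, div_pow, inv_div, sub_neg_eq_add, mul_pow]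
  ring

/-- the distribution of the Yule–Furry process subordinated to the
first-passage time of an independent fractional Poisson process:
`∫_0^∞ e^{−λ_α s}(1−e^{−λ_α s})^{r−1} f_k^ν(s) ds
 = Σ_{h=1}^r C(r−1,h−1)(−1)^{h−1}(1 + h^ν λ_α^ν/λ_β)^{−k}`. -/
theorem yule_at_fractional_hitting_distribution (ν lα lβ : ℝ)
    (hν : ν ∈ Set.Ioc (0 : ℝ) 1) (hα : 0 < lα) (hβ : 0 < lβ) (hcond : lβ < lα ^ ν)
    (k r : ℕ) (hk : 1 ≤ k) (hr : 1 ≤ r) :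
    ∫ s in Set.Ioi (0 : ℝ), Real.exp (-lα * s) * (1 - Real.exp (-lα * s)) ^ (r - 1) *
      (lβ ^ k * ∑' j : ℕ, (-1 : ℝ) ^ j * ((k + j - 1).choose j : ℝ) * lβ ^ j *
        s ^ (ν * ((k : ℝ) + j) - 1) / Real.Gamma (ν * ((k : ℝ) + j))) =
    ∑ h ∈ Finset.Icc 1 r, ((r - 1).choose (h - 1) : ℝ) * (-1 : ℝ) ^ (h - 1) *
      (1 + (h : ℝ) ^ ν * lα ^ ν / lβ) ^ (-(k : ℤ)) := by
  obtain ⟨n, rfl⟩ : ∃ n, r = n + 1 := ⟨r - 1, by omega⟩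
  have hrate (i : ℕ) : 0 < ((i : ℝ) + 1) * lα := by positivity
  have hβrate (i : ℕ) : lβ < (((i : ℝ) + 1) * lα) ^ ν :=
    hcond.trans_le (rpow_le_rpow hα.le (le_mul_of_one_le_left hα.le (by simp)) hν.1.le)
  have laplace (i : ℕ) := integrableOn_and_integral_exp_neg_mul_mul_fracPoissonHittingDensity
    hν.1 hβ (hrate i) (hβrate i) hk
  have hexpand (s : ℝ) :
      exp (-lα * s) * (1 - exp (-lα * s)) ^ n * fracPoissonHittingDensity ν lβ k s =
      ∑ i ∈ range (n + 1), (n.choose i : ℝ) * (-1) ^ i *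
        (exp (-((((i : ℝ) + 1) * lα) * s)) * fracPoissonHittingDensity ν lβ k s) := by
    rw [neg_mul, exp_neg_mul_one_sub_exp_neg_pow, sum_mul]
    simp only [mul_assoc]
  calc _ = ∫ s in Ioi 0,
          exp (-lα * s) * (1 - exp (-lα * s)) ^ n * fracPoissonHittingDensity ν lβ k s := rfl
    _ = ∑ i ∈ range (n + 1), (n.choose i : ℝ) * (-1) ^ i *
          (1 + (((i : ℝ) + 1) * lα) ^ ν / lβ) ^ (-(k : ℤ)) := by
        simp only [hexpand]
        rw [integral_finsetSum _ fun i _ ↦ (laplace i).1.const_mul _]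
        simp only [integral_const_mul, (laplace _).2]
    _ = _ := by
        rw [← Finset.Ico_add_one_right_eq_Icc, Finset.sum_Ico_eq_sum_range]
        refine sum_congr (by simp) fun i _ ↦ ?_
        rw [mul_rpow (by positivity) hα.le, Nat.add_sub_cancel_left, Nat.add_sub_cancel,
          Nat.cast_add, Nat.cast_one, add_comm (1 : ℝ) i]
end

section
/- Let λ_α, λ_β > 0 and let r ≥ 1 be an integer. Then Σ_{h=1}^{r} C(r−1, h−1) (−1)^{h−1} · λ_β/(λ_β + h λ_α) = (λ_β/λ_α) · (r−1)! · Γ(λ_β/λ_α + 1) / Γ(λ_β/λ_α + 1 + r) = (λ_β/λ_α) · B(r, λ_β/λ_α + 1), where B denotes the Beta function; that is, Pr{Y_α(τ_1^1) = r} has the Beta form above. -/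
/-!
With `c = lβ / lα` each term is `c` times `(-1)^k C(n,k) / (c + 1 + k)`, `n = r - 1`, and the
alternating binomial sum of `1 / (x + k)` is `(-1)^n` times the `n`-th forward difference of
`t ↦ 1/t` at `x`. Since `Γ(x + 1) = x Γ(x)`, that difference is `(-1)^n n! Γ(x) / Γ(x + n + 1)`
by induction on `n`.
-/
open Real Finset Nat

theorem fwdDiff_iter_inv_eq_Gamma (n : ℕ) {x : ℝ} (hx : 0 < x) :
    (fwdDiff 1)^[n] (fun t : ℝ ↦ t⁻¹) x = (-1) ^ n * n ! * Gamma x / Gamma (x + n + 1) := by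
  induction n generalizing x with
  | zero => simp [Gamma_add_one hx.ne']; field_simp
  | succ n ih =>
    have hΓ : 0 < Gamma x := Gamma_pos_of_pos hx
    have hΓn : 0 < Gamma (x + n + 1) := Gamma_pos_of_pos (by positivity)
    rw [Function.iterate_succ_apply', fwdDiff, ih (by positivity), ih hx, Gamma_add_one hx.ne',
      show x + 1 + n + 1 = x + ↑(n + 1) + 1 by push_cast; ring, Gamma_add_one (by positivity),
      show x + ↑(n + 1) = x + n + 1 by push_cast; ring]
    field_simp
    push_cast [factorial_succ]
    ring

theorem sum_choose_mul_neg_one_pow_div_add (n : ℕ) {x : ℝ} (hx : 0 < x) :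
    ∑ k ∈ range (n + 1), (n.choose k : ℝ) * (-1) ^ k / (x + k) =
      n ! * Gamma x / Gamma (x + n + 1) := by
  have hsign : ∀ k ∈ range (n + 1), (n.choose k : ℝ) * (-1) ^ k / (x + k) =
      (-1) ^ n * (((-1 : ℤ) ^ (n - k) * n.choose k) • (x + k • (1 : ℝ))⁻¹) := by
    intro k hk
    obtain ⟨j, rfl⟩ := Nat.exists_eq_add_of_le (mem_range_succ_iff.1 hk)
    simp only [Nat.add_sub_cancel_left, pow_add, nsmul_eq_mul, mul_one, zsmul_eq_mul]
    have hsq : ((-1 : ℝ) ^ j) * (-1) ^ j = 1 := by rw [← mul_pow]; norm_num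
    push_cast
    linear_combination (-((k + j).choose k : ℝ) * (-1) ^ k * (x + k)⁻¹) * hsq
  rw [sum_congr rfl hsign, ← mul_sum, ← fwdDiff_iter_eq_sum_shift, fwdDiff_iter_inv_eq_Gamma n hx]
  simp only [mul_div_assoc, ← mul_assoc, ← mul_pow, neg_one_mul, neg_neg, one_pow, one_mul]

/-- `Pr{Y_α(τ_1^1) = r} = Σ_{h=1}^r C(r−1,h−1)(−1)^{h−1} λ_β/(λ_β+hλ_α)`
equals `(λ_β/λ_α)(r−1)!Γ(λ_β/λ_α+1)/Γ(λ_β/λ_α+1+r) = (λ_β/λ_α) B(r, λ_β/λ_α+1)`,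
where `B(x,y) = Γ(x)Γ(y)/Γ(x+y)`. -/
theorem yule_at_exponential_beta_form (lα lβ : ℝ) (hα : 0 < lα) (hβ : 0 < lβ)
    (r : ℕ) (hr : 1 ≤ r) :
    (∑ h ∈ Finset.Icc 1 r, ((r - 1).choose (h - 1) : ℝ) * (-1 : ℝ) ^ (h - 1) *
        (lβ / (lβ + (h : ℝ) * lα)) =
      lβ / lα * (Nat.factorial (r - 1) : ℝ) * Real.Gamma (lβ / lα + 1) /
        Real.Gamma (lβ / lα + 1 + r)) ∧
    lβ / lα * (Nat.factorial (r - 1) : ℝ) * Real.Gamma (lβ / lα + 1) /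
        Real.Gamma (lβ / lα + 1 + r) =
      lβ / lα * (Real.Gamma r * Real.Gamma (lβ / lα + 1) /
        Real.Gamma ((r : ℝ) + (lβ / lα + 1))) := by
  obtain ⟨n, rfl⟩ : ∃ n, r = n + 1 := ⟨r - 1, by omega⟩
  have hc : 0 < lβ / lα := div_pos hβ hα
  have hterm : ∀ k ∈ range (n + 1), (n.choose k : ℝ) * (-1) ^ k * (lβ / (lβ + ↑(k + 1) * lα)) =
      lβ / lα * ((n.choose k : ℝ) * (-1) ^ k / (lβ / lα + 1 + k)) := by
    intro k _
    field_simp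
    push_cast
    ring
  simp only [Nat.add_sub_cancel]
  refine ⟨?_, ?_⟩
  · rw [← Ico_add_one_right_eq_Icc, sum_Ico_eq_sum_range]
    simp only [Nat.add_sub_cancel, add_comm 1]
    rw [sum_congr rfl hterm, ← mul_sum, sum_choose_mul_neg_one_pow_div_add n (by positivity)]
    push_cast
    rw [← add_assoc]
    ring
  · push_cast
    rw [Gamma_nat_eq_factorial, add_comm (n + 1 : ℝ)]
    ring
end

section
/- Let λ > 0 and 0 < s < t. On a probability space let (X_j)_{j≥1} be i.i.d. real random variables with E[|X_1|] < ∞ and E[X_1²] < ∞, let M be Poisson with parameter λs and K Poisson with parameter λ(t−s), with (X_j), M, K jointly independent. Define N_π(s) = ∏_{j=1}^{M} X_j and N_π(t) = ∏_{j=1}^{M+K} X_j (empty products equal 1). Then E[N_π(t) · N_π(s)] = e^{λ s (E[X²] − 1)} · e^{λ (t−s)(E[X] − 1)}, and consequently Cov(N_π(t), N_π(s)) = e^{λ t (E[X] − 1)} · (e^{λ s E[X(X−1)]} − e^{λ s (E[X] − 1)}), where X = X_1. -/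
open MeasureTheory ProbabilityTheory

/-- The joint family consisting of the factors `X j` (indices `Sum.inl j`) and the two
Poisson counting variables `M` (index `Sum.inr true`) and `K` (index `Sum.inr false`). -/
def covFam {Ω : Type*} (X : ℕ → Ω → ℝ) (M K : Ω → ℕ) :
    (i : ℕ ⊕ Bool) → Ω → Sum.elim (fun _ : ℕ => ℝ) (fun _ : Bool => ℕ) i
  | Sum.inl j => X j
  | Sum.inr true => M
  | Sum.inr false => K

/-- The canonical measurable-space structure on the codomains of `covFam`. -/
def covMS : (i : ℕ ⊕ Bool) → MeasurableSpace (Sum.elim (fun _ : ℕ => ℝ) (fun _ : Bool => ℕ) i)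
  | Sum.inl _ => (inferInstance : MeasurableSpace ℝ)
  | Sum.inr _ => (inferInstance : MeasurableSpace ℕ)

/-!
On the event `{M = m, K = k}` the integrand `∏_{j<M} f(X_j) · ∏_{M≤j<M+K} g(X_j)` is a fixed
product of `m + k` independent factors, independent of the event itself, so its integral there is
`P(M = m) E[f(X)]^m · P(K = k) E[g(X)]^k`. Summing over `(m, k)` gives `G_M(E f(X)) · G_K(E g(X))`
with `G` the probability generating functions, `G(z) = exp(c(z - 1))` for a Poisson law of mean `c`.
Since `N_π(t) N_π(s) = ∏_{j<M} X_j² ∏_{M≤j<M+K} X_j`, all three expectations in the covariance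
are of this form (with `(f, g) = (x², x), (x, x), (x, 1)`).
-/

open Finset

theorem hasSum_poisson_pgf (c z : ℝ) :
    HasSum (fun n : ℕ => Real.exp (-c) * c ^ n / n.factorial * z ^ n) (Real.exp (c * (z - 1))) := by
  have hterm : (fun n : ℕ => Real.exp (-c) * c ^ n / n.factorial * z ^ n)
      = fun n => Real.exp (-c) * ((c * z) ^ n / n.factorial) := by
    funext n; rw [mul_pow]; ring
  rw [hterm, show c * (z - 1) = -c + c * z by ring, Real.exp_add, Real.exp_eq_exp_ℝ]
  exact (NormedSpace.expSeries_div_hasSum_exp (c * z)).mul_left _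

theorem Finset.prod_range_mul_prod_Ico_eq_prod_range_ite {R : Type*} [CommMonoid R]
    (a b : ℕ → R) (m k : ℕ) :
    (∏ j ∈ range m, a j) * ∏ j ∈ Ico m (m + k), b j
      = ∏ j ∈ range (m + k), if j < m then a j else b j := by
  rw [← prod_range_mul_prod_Ico _ (Nat.le_add_right m k)]
  congr 1
  · exact prod_congr rfl fun j hj => (if_pos (mem_range.1 hj)).symm
  · exact prod_congr rfl fun j hj => (if_neg (mem_Ico.1 hj).1.not_gt).symm

theorem Finset.prod_range_add_mul_prod_range {R : Type*} [CommMonoid R] (a : ℕ → R) (m k : ℕ) :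
    (∏ j ∈ range (m + k), a j) * ∏ j ∈ range m, a j
      = (∏ j ∈ range m, a j ^ 2) * ∏ j ∈ Ico m (m + k), a j := by
  rw [← prod_range_mul_prod_Ico a (Nat.le_add_right m k), prod_pow, mul_right_comm, ← sq]

section

variable {Ω : Type*} [MeasurableSpace Ω] {μ : Measure Ω}

theorem hasSum_measureReal_mul_pow_of_poisson {M : Ω → ℕ} {c : ℝ} (hc : 0 ≤ c)
    (hM : ∀ n : ℕ, μ {ω | M ω = n} = ENNReal.ofReal (Real.exp (-c) * c ^ n / n.factorial))
    (z : ℝ) :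
    HasSum (fun n : ℕ => μ.real {ω | M ω = n} * z ^ n) (Real.exp (c * (z - 1))) := by
  have hpmf : ∀ n : ℕ, μ.real {ω | M ω = n} = Real.exp (-c) * c ^ n / n.factorial := fun n => by
    rw [measureReal_def, hM, ENNReal.toReal_ofReal (by positivity)]
  simpa only [hpmf] using hasSum_poisson_pgf c z

theorem ProbabilityTheory.iIndepFun.integrable_fun_finset_prod {ι : Type*} {g : ι → Ω → ℝ}
    (hg : iIndepFun g μ) (hmeas : ∀ i, Measurable (g i)) (hint : ∀ i, Integrable (g i) μ)
    (S : Finset ι) : Integrable (fun ω => ∏ i ∈ S, g i ω) μ := by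
  classical
  have := hg.isProbabilityMeasure
  induction S using Finset.induction_on with
  | empty => simp
  | insert i S hiS ih =>
    simp_rw [prod_insert hiS]
    have hindep := (hg.indepFun_finsetProd_of_notMem hmeas hiS).symm
    rw [Finset.prod_fn] at hindep
    exact hindep.integrable_mul (hint i) ih

theorem ProbabilityTheory.iIndepFun.integral_fun_finset_prod {ι : Type*} {g : ι → Ω → ℝ}
    (hg : iIndepFun g μ) (hmeas : ∀ i, AEStronglyMeasurable (g i) μ) (S : Finset ι) :
    ∫ ω, ∏ i ∈ S, g i ω ∂μ = ∏ i ∈ S, ∫ ω, g i ω ∂μ := by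
  simp_rw [← Finset.prod_coe_sort S]
  exact (hg.precomp Subtype.val_injective).integral_fun_prod_eq_prod_integral
    (fun i : S => hmeas i)

theorem integral_eq_tsum_setIntegral_fiber {E ι : Type*} [NormedAddCommGroup E]
    [NormedSpace ℝ E] [Countable ι] [MeasurableSpace ι] [MeasurableSingletonClass ι]
    {N : Ω → ι} (hN : Measurable N) {F : ι → Ω → E}
    (hint : ∀ i, IntegrableOn (F i) (N ⁻¹' {i}) μ)
    (hsum : Summable fun i => ∫ ω in N ⁻¹' {i}, ‖F i ω‖ ∂μ) :
    ∫ ω, F (N ω) ω ∂μ = ∑' i, ∫ ω in N ⁻¹' {i}, F i ω ∂μ := by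
  have hmeas : ∀ i, MeasurableSet (N ⁻¹' {i}) := fun i => hN (measurableSet_singleton i)
  have hfiber : ∀ i, Set.EqOn (fun ω => F (N ω) ω) (F i) (N ⁻¹' {i}) := by
    intro i ω hω
    simp only [Set.mem_preimage, Set.mem_singleton_iff] at hω
    simp only [hω]
  have hcover : ⋃ i, N ⁻¹' {i} = Set.univ := by
    rw [← Set.preimage_iUnion, Set.iUnion_of_singleton, Set.preimage_univ]
  have hintU : IntegrableOn (fun ω => F (N ω) ω) (⋃ i, N ⁻¹' {i}) μ :=
    integrableOn_iUnion_of_summable_integral_norm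
      (fun i => (hint i).congr_fun (hfiber i).symm (hmeas i))
      (hsum.congr fun i => setIntegral_congr_fun (hmeas i) fun ω hω =>
        congrArg norm (hfiber i hω).symm)
  rw [← setIntegral_univ, ← hcover, integral_iUnion hmeas (pairwise_disjoint_fiber N) hintU]
  exact tsum_congr fun i => setIntegral_congr_fun (hmeas i) (hfiber i)

theorem integral_indicator_singleton_comp {N : Ω → ℕ} (hN : Measurable N) (n : ℕ) :
    ∫ ω, ({n} : Set ℕ).indicator (1 : ℕ → ℝ) (N ω) ∂μ = μ.real {ω | N ω = n} :=
  integral_indicator_one (hN (measurableSet_singleton n))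

theorem setIntegral_fiber_prod_comp_covFam {X : ℕ → Ω → ℝ} {M K : Ω → ℕ}
    (hX : ∀ j, Measurable (X j)) (hM : Measurable M) (hK : Measurable K)
    (hindep : iIndepFun (m := covMS) (covFam X M K) μ)
    {φ : ℕ → ℝ → ℝ} (hφ : ∀ j, Measurable (φ j)) (S : Finset ℕ) (m k : ℕ) :
    ∫ ω in (fun ω => (M ω, K ω)) ⁻¹' {(m, k)}, ∏ j ∈ S, φ j (X j ω) ∂μ
      = (∏ j ∈ S, ∫ ω, φ j (X j ω) ∂μ) * (μ.real {ω | M ω = m} * μ.real {ω | K ω = k}) := by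
  set ψ : (i : ℕ ⊕ Bool) → Sum.elim (fun _ : ℕ => ℝ) (fun _ : Bool => ℕ) i → ℝ := fun i =>
    match i with
    | Sum.inl j => φ j
    | Sum.inr true => ({m} : Set ℕ).indicator 1
    | Sum.inr false => ({k} : Set ℕ).indicator 1
  have hψ : ∀ i, Measurable[covMS i] (ψ i) := by
    rintro (j | _ | _)
    · exact hφ j
    all_goals exact measurable_from_top
  have hmeas : ∀ i, AEStronglyMeasurable (fun ω => ψ i (covFam X M K i ω)) μ := by
    rintro (j | _ | _)
    · exact ((hφ j).comp (hX j)).aestronglyMeasurable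
    · exact ((hψ (Sum.inr false)).comp hK).aestronglyMeasurable
    · exact ((hψ (Sum.inr true)).comp hM).aestronglyMeasurable
  have hprod : ∀ ω, ∏ i ∈ S.disjSum univ, ψ i (covFam X M K i ω)
      = ((fun ω => (M ω, K ω)) ⁻¹' {(m, k)}).indicator (fun ω => ∏ j ∈ S, φ j (X j ω)) ω := by
    intro ω
    rw [prod_disjSum, Fintype.prod_bool]
    by_cases hm : M ω = m <;> by_cases hk : K ω = k <;> simp [ψ, covFam, hm, hk]
  have hg : iIndepFun (fun i ω => ψ i (covFam X M K i ω)) μ := hindep.comp ψ hψ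
  rw [← integral_indicator ((hM.prodMk hK) (measurableSet_singleton _)),
    ← integral_congr_ae (.of_forall hprod), hg.integral_fun_finset_prod hmeas, prod_disjSum,
    Fintype.prod_bool]
  simp only [ψ, covFam, integral_indicator_singleton_comp hM, integral_indicator_singleton_comp hK]

theorem integrable_prod_range_mul_prod_Ico {X : ℕ → Ω → ℝ} (hX : ∀ j, Measurable (X j))
    (hXindep : iIndepFun X μ) {f g : ℝ → ℝ} (hf : Measurable f) (hg : Measurable g)
    (hfi : ∀ j, Integrable (fun ω => f (X j ω)) μ) (hgi : ∀ j, Integrable (fun ω => g (X j ω)) μ)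
    (m k : ℕ) :
    Integrable (fun ω => (∏ j ∈ range m, f (X j ω)) * ∏ j ∈ Ico m (m + k), g (X j ω)) μ := by
  simp_rw [prod_range_mul_prod_Ico_eq_prod_range_ite]
  have hφ : ∀ j, Measurable fun x => if j < m then f x else g x :=
    fun j => by split_ifs <;> assumption
  refine (hXindep.comp _ hφ).integrable_fun_finset_prod (fun j => (hφ j).comp (hX j))
    (fun j => ?_) _
  by_cases hj : j < m
  · simpa [Function.comp_def, hj] using hfi j
  · simpa [Function.comp_def, hj] using hgi j

theorem setIntegral_fiber_prod_range_mul_prod_Ico {X : ℕ → Ω → ℝ} {M K : Ω → ℕ}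
    (hX : ∀ j, Measurable (X j)) (hM : Measurable M) (hK : Measurable K)
    (hindep : iIndepFun (m := covMS) (covFam X M K) μ)
    (hident : ∀ j, IdentDistrib (X j) (X 0) μ μ) {f g : ℝ → ℝ} (hf : Measurable f)
    (hg : Measurable g) (m k : ℕ) :
    ∫ ω in (fun ω => (M ω, K ω)) ⁻¹' {(m, k)},
        (∏ j ∈ range m, f (X j ω)) * ∏ j ∈ Ico m (m + k), g (X j ω) ∂μ
      = (μ.real {ω | M ω = m} * (∫ ω, f (X 0 ω) ∂μ) ^ m)
        * (μ.real {ω | K ω = k} * (∫ ω, g (X 0 ω) ∂μ) ^ k) := by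
  have hmoment : ∀ {u : ℝ → ℝ}, Measurable u → ∀ j, ∫ ω, u (X j ω) ∂μ = ∫ ω, u (X 0 ω) ∂μ :=
    fun hu j => ((hident j).comp hu).integral_eq
  have hfirst : ∏ j ∈ range m, ∫ ω, (if j < m then f (X j ω) else g (X j ω)) ∂μ
      = (∫ ω, f (X 0 ω) ∂μ) ^ m := by
    calc _ = ∏ _j ∈ range m, ∫ ω, f (X 0 ω) ∂μ := prod_congr rfl fun j hj => by
            simp only [if_pos (mem_range.1 hj)]; exact hmoment hf j
      _ = _ := by rw [prod_const, card_range]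
  have hsecond : ∏ j ∈ Ico m (m + k), ∫ ω, (if j < m then f (X j ω) else g (X j ω)) ∂μ
      = (∫ ω, g (X 0 ω) ∂μ) ^ k := by
    calc _ = ∏ _j ∈ Ico m (m + k), ∫ ω, g (X 0 ω) ∂μ := prod_congr rfl fun j hj => by
            simp only [if_neg (mem_Ico.1 hj).1.not_gt]; exact hmoment hg j
      _ = _ := by rw [prod_const, Nat.card_Ico, Nat.add_sub_cancel_left]
  simp_rw [prod_range_mul_prod_Ico_eq_prod_range_ite]
  rw [setIntegral_fiber_prod_comp_covFam hX hM hK hindep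
    (φ := fun j x => if j < m then f x else g x) (fun j => by split_ifs <;> assumption),
    ← prod_range_mul_prod_Ico _ (Nat.le_add_right m k), hfirst, hsecond]
  ring

theorem summable_norm_measureReal_mul_pow {N : Ω → ℕ}
    (hN : ∀ z : ℝ, Summable fun n : ℕ => μ.real {ω | N ω = n} * z ^ n) (z : ℝ) :
    Summable fun n : ℕ => ‖μ.real {ω | N ω = n} * z ^ n‖ :=
  (hN |z|).congr fun n => by
    rw [norm_mul, norm_pow, Real.norm_eq_abs, Real.norm_eq_abs, abs_of_nonneg measureReal_nonneg]

theorem integral_prod_range_mul_prod_Ico_eq_pgf_mul_pgf {X : ℕ → Ω → ℝ} {M K : Ω → ℕ}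
    (hX : ∀ j, Measurable (X j)) (hM : Measurable M) (hK : Measurable K)
    (hindep : iIndepFun (m := covMS) (covFam X M K) μ)
    (hident : ∀ j, IdentDistrib (X j) (X 0) μ μ) {GM GK : ℝ → ℝ}
    (hGM : ∀ z, HasSum (fun n : ℕ => μ.real {ω | M ω = n} * z ^ n) (GM z))
    (hGK : ∀ z, HasSum (fun n : ℕ => μ.real {ω | K ω = n} * z ^ n) (GK z))
    (f g : ℝ → ℝ) (hf : Measurable f) (hg : Measurable g)
    (hfi : Integrable (fun ω => f (X 0 ω)) μ) (hgi : Integrable (fun ω => g (X 0 ω)) μ) :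
    ∫ ω, (∏ j ∈ range (M ω), f (X j ω)) * ∏ j ∈ Ico (M ω) (M ω + K ω), g (X j ω) ∂μ
      = GM (∫ ω, f (X 0 ω) ∂μ) * GK (∫ ω, g (X 0 ω) ∂μ) := by
  have hXindep : iIndepFun X μ := (hindep.precomp Sum.inl_injective :)
  have hint : ∀ {u : ℝ → ℝ}, Measurable u → Integrable (fun ω => u (X 0 ω)) μ →
      ∀ j, Integrable (fun ω => u (X j ω)) μ :=
    fun hu hu0 j => ((hident j).comp hu).integrable_iff.2 hu0
  have hpgf : ∀ a b, HasSum
      (fun p : ℕ × ℕ => (μ.real {ω | M ω = p.1} * a ^ p.1) * (μ.real {ω | K ω = p.2} * b ^ p.2))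
      (GM a * GK b) := fun a b =>
    (hGM a).mul (hGK b) (summable_mul_of_summable_norm (f := fun n => μ.real {ω | M ω = n} * a ^ n)
      (g := fun n => μ.real {ω | K ω = n} * b ^ n)
      (summable_norm_measureReal_mul_pow (fun z => (hGM z).summable) a)
      (summable_norm_measureReal_mul_pow (fun z => (hGK z).summable) b))
  set F : ℕ × ℕ → Ω → ℝ := fun p ω =>
    (∏ j ∈ range p.1, f (X j ω)) * ∏ j ∈ Ico p.1 (p.1 + p.2), g (X j ω)
  have hnorm : ∀ p ω, ‖F p ω‖
      = (∏ j ∈ range p.1, |f (X j ω)|) * ∏ j ∈ Ico p.1 (p.1 + p.2), |g (X j ω)| := by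
    intro p ω
    simp only [F, Real.norm_eq_abs, abs_mul, abs_prod]
  -- The same computation with `|f|, |g|` bounds the fibrewise norms, which justifies the
  -- exchange of sum and integral.
  refine (integral_eq_tsum_setIntegral_fiber (hM.prodMk hK) (F := F)
    (fun p => (integrable_prod_range_mul_prod_Ico hX hXindep hf hg (hint hf hfi) (hint hg hgi)
      p.1 p.2).integrableOn) ?_).trans ?_
  · simp_rw [hnorm]
    exact (hpgf _ _).summable.congr fun ⟨m, k⟩ =>
      (setIntegral_fiber_prod_range_mul_prod_Ico hX hM hK hindep hident hf.abs hg.abs m k).symm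
  · rw [tsum_congr fun p : ℕ × ℕ =>
      setIntegral_fiber_prod_range_mul_prod_Ico hX hM hK hindep hident hf hg p.1 p.2]
    exact (hpgf _ _).tsum_eq

end

/-- covariance of the multiplicative compound Poisson process. With
`N_π(s) = ∏_{j<M} X_j` and `N_π(t) = ∏_{j<M+K} X_j`, where `M ~ Poisson(λs)`,
`K ~ Poisson(λ(t−s))` and the i.i.d. `X_j` are jointly independent of `(M,K)`,
`E[N_π(t)N_π(s)] = e^{λs(E[X²]−1)} e^{λ(t−s)(E[X]−1)}` and
`Cov(N_π(t),N_π(s)) = e^{λt(E[X]−1)}(e^{λsE[X(X−1)]} − e^{λs(E[X]−1)})`. -/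
theorem covariance_multiplicative_compound_poisson {Ω : Type*} [MeasurableSpace Ω]
    (μ : Measure Ω) [IsProbabilityMeasure μ] (lam s t : ℝ) (hlam : 0 < lam)
    (hs : 0 < s) (hst : s < t) (X : ℕ → Ω → ℝ) (M K : Ω → ℕ)
    (hXmeas : ∀ j, Measurable (X j)) (hMmeas : Measurable M) (hKmeas : Measurable K)
    (hM : ∀ k : ℕ, μ {ω | M ω = k} =
      ENNReal.ofReal (Real.exp (-(lam * s)) * (lam * s) ^ k / (Nat.factorial k)))
    (hK : ∀ k : ℕ, μ {ω | K ω = k} =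
      ENNReal.ofReal (Real.exp (-(lam * (t - s))) * (lam * (t - s)) ^ k / (Nat.factorial k)))
    (hident : ∀ j, Measure.map (X j) μ = Measure.map (X 0) μ)
    (hmom1 : Integrable (fun ω => X 0 ω) μ)
    (hmom2 : Integrable (fun ω => (X 0 ω) ^ 2) μ)
    (hindep : iIndepFun (m := covMS) (covFam X M K) μ) :
    ∫ ω, (∏ j ∈ Finset.range (M ω + K ω), X j ω) * (∏ j ∈ Finset.range (M ω), X j ω) ∂μ =
      Real.exp (lam * s * ((∫ ω, (X 0 ω) ^ 2 ∂μ) - 1)) *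
        Real.exp (lam * (t - s) * ((∫ ω, X 0 ω ∂μ) - 1)) ∧
    (∫ ω, (∏ j ∈ Finset.range (M ω + K ω), X j ω) * (∏ j ∈ Finset.range (M ω), X j ω) ∂μ) -
      (∫ ω, ∏ j ∈ Finset.range (M ω + K ω), X j ω ∂μ) *
        (∫ ω, ∏ j ∈ Finset.range (M ω), X j ω ∂μ) =
      Real.exp (lam * t * ((∫ ω, X 0 ω ∂μ) - 1)) *
        (Real.exp (lam * s * (∫ ω, X 0 ω * (X 0 ω - 1) ∂μ)) -
          Real.exp (lam * s * ((∫ ω, X 0 ω ∂μ) - 1))) := by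
  have hGM := hasSum_measureReal_mul_pow_of_poisson (by positivity) hM
  have hGK := hasSum_measureReal_mul_pow_of_poisson
    (mul_nonneg hlam.le (sub_nonneg.2 hst.le)) hK
  have hmoments := integral_prod_range_mul_prod_Ico_eq_pgf_mul_pgf hXmeas hMmeas hKmeas hindep
    (fun j => ⟨(hXmeas j).aemeasurable, (hXmeas 0).aemeasurable, hident j⟩) hGM hGK
  have hjoint := hmoments (fun x => x ^ 2) id (measurable_id.pow_const 2) measurable_id hmom2 hmom1
  have hlong := hmoments id id measurable_id measurable_id hmom1 hmom1
  have hshort := hmoments id (fun _ => 1) measurable_id measurable_const hmom1 (integrable_const 1)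
  simp only [id, prod_range_mul_prod_Ico _ (Nat.le_add_right _ _), prod_const_one, mul_one,
    integral_const, probReal_univ, smul_eq_mul, sub_self, mul_zero, Real.exp_zero]
    at hjoint hlong hshort
  have hfactorial : ∫ ω, X 0 ω * (X 0 ω - 1) ∂μ = ∫ ω, X 0 ω ^ 2 ∂μ - ∫ ω, X 0 ω ∂μ := by
    rw [← integral_sub hmom2 hmom1]
    congr 1 with ω
    ring
  simp_rw [prod_range_add_mul_prod_range]
  refine ⟨hjoint, ?_⟩
  rw [hjoint, hlong, hshort, hfactorial, ← Real.exp_add, ← Real.exp_add, ← Real.exp_add,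
    mul_sub (Real.exp _), ← Real.exp_add, ← Real.exp_add]
  congr 1 <;> congr 1 <;> ring
end

section
/- Let a ∈ ℝ and b > 0, and let X be a real random variable with the Cauchy distribution C(a, b), i.e. with probability density x ↦ (1/π) · b/((x−a)² + b²). Then X ≠ 0 almost surely and the random variable 1/X has the Cauchy distribution C(a/(a²+b²), b/(a²+b²)), i.e. its density is x ↦ (1/π) · (b/(a²+b²)) / ((x − a/(a²+b²))² + (b/(a²+b²))²). In particular, if a = 0 then 1/X ~ C(0, 1/b). -/
open MeasureTheory ProbabilityTheory
open scoped NNReal ENNReal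

/-! Inversion is a diffeomorphism of `ℝ \ {0}` with Jacobian `x⁻²`, so by the change of
variables formula it sends a density `f` to `x ↦ x⁻² f(x⁻¹)`, and `{0}` is Lebesgue-null.
For the Cauchy density, `x⁻² · b / ((x⁻¹ - a)² + b²) = b / ((a² + b²) x² - 2 a x + 1)`,
which after completing the square is again a Cauchy density. -/

theorem Real.image_inv_sdiff_zero (s : Set ℝ) :
    (·⁻¹) '' (s \ {0}) = (·⁻¹) ⁻¹' s \ {0} := by
  ext x
  simp

theorem Real.map_inv_volume_withDensity (f : ℝ → ℝ≥0∞) :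
    (volume.withDensity f).map (·⁻¹) =
      volume.withDensity fun x ↦ ENNReal.ofReal (x ^ 2)⁻¹ * f x⁻¹ := by
  ext s hs
  have hs₀ : MeasurableSet (s \ {0}) := hs.diff (measurableSet_singleton 0)
  rw [Measure.map_apply measurable_inv hs, withDensity_apply _ (measurable_inv hs),
    withDensity_apply _ hs,
    ← setLIntegral_congr (sdiff_null_ae_eq_self (measure_singleton 0)),
    ← Real.image_inv_sdiff_zero,
    lintegral_image_eq_lintegral_abs_deriv_mul hs₀
      (fun x hx ↦ (hasDerivAt_inv hx.2).hasDerivWithinAt) inv_injective.injOn,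
    setLIntegral_congr (sdiff_null_ae_eq_self (measure_singleton 0))]
  simp

namespace ProbabilityTheory

theorem cauchyPDFReal_inv (x₀ : ℝ) (γ : ℝ≥0) {x : ℝ} (hx : x ≠ 0) :
    (x ^ 2)⁻¹ * cauchyPDFReal x₀ γ x⁻¹ =
      cauchyPDFReal (x₀ / (x₀ ^ 2 + γ ^ 2)) (γ / (x₀ ^ 2 + γ ^ 2)).toNNReal x := by
  rcases eq_or_ne γ 0 with rfl | hγ
  · simp [cauchyPDFReal]
  have hγ_pos : (0 : ℝ) < γ := by positivity
  have hnorm_pos : (0 : ℝ) < x₀ ^ 2 + γ ^ 2 := by positivity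
  rw [cauchyPDFReal_def, cauchyPDFReal_def, Real.coe_toNNReal _ (by positivity)]
  field_simp
  ring

theorem map_inv_cauchyMeasure (x₀ : ℝ) (γ : ℝ≥0) :
    (cauchyMeasure x₀ γ).map (·⁻¹) =
      cauchyMeasure (x₀ / (x₀ ^ 2 + γ ^ 2)) (γ / (x₀ ^ 2 + γ ^ 2)).toNNReal := by
  rcases eq_or_ne γ 0 with rfl | hγ
  · simp [Measure.map_dirac' measurable_inv, sq, div_self_mul_self']
  have hγ_inv : (γ / (x₀ ^ 2 + γ ^ 2) : ℝ).toNNReal ≠ 0 := by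
    have : (0 : ℝ) < γ := by positivity
    rw [Ne, Real.toNNReal_eq_zero, not_le]
    positivity
  rw [cauchyMeasure_of_scale_ne_zero _ hγ, cauchyMeasure_of_scale_ne_zero _ hγ_inv,
    Real.map_inv_volume_withDensity]
  refine withDensity_congr_ae ?_
  filter_upwards [compl_mem_ae_iff.2 (measure_singleton (μ := volume) (0 : ℝ))] with x hx
  rw [cauchyPDF, cauchyPDF, ← cauchyPDFReal_inv x₀ γ hx, ENNReal.ofReal_mul (by positivity)]

theorem cauchyMeasure_singleton (x₀ : ℝ) {γ : ℝ≥0} (hγ : γ ≠ 0) (x : ℝ) :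
    cauchyMeasure x₀ γ {x} = 0 := by
  rw [cauchyMeasure_of_scale_ne_zero _ hγ]
  exact withDensity_absolutelyContinuous _ _ (measure_singleton x)

theorem cauchyPDF_toNNReal {a b : ℝ} (hb : 0 ≤ b) :
    cauchyPDF a b.toNNReal =
      fun x ↦ ENNReal.ofReal ((1 / Real.pi) * (b / ((x - a) ^ 2 + b ^ 2))) := by
  ext x
  rw [cauchyPDF, cauchyPDFReal_def, Real.coe_toNNReal _ hb]
  ring_nf

end ProbabilityTheory

theorem inv_cauchy_general {Ω : Type*} [MeasurableSpace Ω] (μ : Measure Ω)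
    (a b : ℝ) (hb : 0 < b) (X : Ω → ℝ) (hXmeas : Measurable X)
    (hX : Measure.map X μ =
      volume.withDensity fun x => ENNReal.ofReal ((1 / Real.pi) * (b / ((x - a) ^ 2 + b ^ 2)))) :
    (∀ᵐ ω ∂μ, X ω ≠ 0) ∧
    Measure.map (fun ω => (X ω)⁻¹) μ =
      volume.withDensity fun x => ENNReal.ofReal ((1 / Real.pi) *
        ((b / (a ^ 2 + b ^ 2)) /
          ((x - a / (a ^ 2 + b ^ 2)) ^ 2 + (b / (a ^ 2 + b ^ 2)) ^ 2))) := by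
  have hb_nnreal : b.toNNReal ≠ 0 := by simpa using hb
  have hX_cauchy : μ.map X = cauchyMeasure a b.toNNReal := by
    rw [cauchyMeasure_of_scale_ne_zero _ hb_nnreal, cauchyPDF_toNNReal hb.le, hX]
  refine ⟨ae_of_ae_map (p := (· ≠ 0)) hXmeas.aemeasurable ?_, ?_⟩
  · rw [hX_cauchy]
    exact compl_mem_ae_iff.2 (cauchyMeasure_singleton a hb_nnreal 0)
  · have hscale : 0 < b / (a ^ 2 + b ^ 2) := by positivity
    calc μ.map (fun ω ↦ (X ω)⁻¹) = (μ.map X).map (·⁻¹) :=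
          (Measure.map_map measurable_inv hXmeas).symm
      _ = _ := by
        rw [hX_cauchy, map_inv_cauchyMeasure, Real.coe_toNNReal _ hb.le,
          cauchyMeasure_of_scale_ne_zero _ (by simpa using hscale), cauchyPDF_toNNReal hscale.le]

/-- if `X ~ C(a,b)` is Cauchy with location `a` and scale `b > 0`, then
`X ≠ 0` almost surely and `1/X ~ C(a/(a²+b²), b/(a²+b²))`. -/
theorem inv_cauchy {Ω : Type*} [MeasurableSpace Ω] (μ : Measure Ω)
    [IsProbabilityMeasure μ] (a b : ℝ) (hb : 0 < b) (X : Ω → ℝ) (hXmeas : Measurable X)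
    (hX : Measure.map X μ =
      volume.withDensity fun x => ENNReal.ofReal ((1 / Real.pi) * (b / ((x - a) ^ 2 + b ^ 2)))) :
    (∀ᵐ ω ∂μ, X ω ≠ 0) ∧
    Measure.map (fun ω => (X ω)⁻¹) μ =
      volume.withDensity fun x => ENNReal.ofReal ((1 / Real.pi) *
        ((b / (a ^ 2 + b ^ 2)) /
          ((x - a / (a ^ 2 + b ^ 2)) ^ 2 + (b / (a ^ 2 + b ^ 2)) ^ 2))) :=
  inv_cauchy_general μ a b hb X hXmeas hX
end

section
/- Let (F_n) be the Fibonacci numbers with F_1 = F_2 = 1 and let φ = (1+√5)/2 be the golden ratio. Then for every integer n ≥ 1, F_{n+1}/F_n = φ + √5 · Σ_{j=1}^∞ ((1−φ)/φ)^{n j}, where the geometric-type series on the right converges absolutely since |(1−φ)/φ| < 1. -/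
/-!
Since `F_{n+1} - φ F_n = ψ^n` with `ψ = 1 - φ`, we get `F_{n+1} / F_n = φ + ψ^n / F_n`, and Binet's
formula `F_n = (φ^n - ψ^n) / √5` turns the error term into `√5 r / (1 - r)` with `r = (ψ / φ)^n`.
As `|ψ| < 1 < φ`, this is the sum of the geometric series `√5 ∑_{j ≥ 1} r^j`.
-/

open Real
open scoped goldenRatio

theorem hasSum_pow_succ_of_norm_lt_one {K : Type*} [NormedDivisionRing K] {ξ : K} (h : ‖ξ‖ < 1) :
    HasSum (fun j : ℕ ↦ ξ ^ (j + 1)) (ξ * (1 - ξ)⁻¹) := by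
  simpa only [pow_succ'] using (hasSum_geometric_of_norm_lt_one h).mul_left ξ

theorem abs_goldenConj_div_goldenRatio_lt_one : |ψ / φ| < 1 := by
  rw [abs_div, abs_of_pos goldenRatio_pos, div_lt_one goldenRatio_pos,
    abs_of_neg goldenConj_neg]
  linarith [neg_one_lt_goldenConj, one_lt_goldenRatio]

theorem fib_succ_div_fib {n : ℕ} (hn : n ≠ 0) :
    (Nat.fib (n + 1) : ℝ) / Nat.fib n = φ + √5 * ((ψ / φ) ^ n * (1 - (ψ / φ) ^ n)⁻¹) := by
  have hfib : (Nat.fib n : ℝ) ≠ 0 := by exact_mod_cast (Nat.fib_pos.mpr (Nat.pos_of_ne_zero hn)).ne'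
  have hφ : φ ^ n ≠ 0 := pow_ne_zero n goldenRatio_ne_zero
  calc (Nat.fib (n + 1) : ℝ) / Nat.fib n = φ + ψ ^ n / Nat.fib n := by
        rw [sub_eq_iff_eq_add'.mp (fib_succ_sub_goldenRatio_mul_fib n), add_div,
          mul_div_cancel_right₀ _ hfib]
    _ = φ + √5 * (ψ ^ n / (φ ^ n - ψ ^ n)) := by
        rw [coe_fib_eq, div_div_eq_mul_div, mul_comm, mul_div_assoc]
    _ = φ + √5 * ((ψ / φ) ^ n * (1 - (ψ / φ) ^ n)⁻¹) := by
        rw [div_pow ψ φ n, one_sub_div hφ, inv_div, div_mul_div_cancel₀ hφ]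

/-- for every `n ≥ 1`, with `φ = (1+√5)/2` the golden ratio and `F_n` the
Fibonacci numbers, `F_{n+1}/F_n = φ + √5 Σ_{j=1}^∞ ((1−φ)/φ)^{nj}`, the series
converging absolutely since `|(1−φ)/φ| < 1`. -/
theorem fib_ratio_golden_series (n : ℕ) (hn : 1 ≤ n) :
    Summable (fun j : ℕ => |((1 - (1 + Real.sqrt 5) / 2) / ((1 + Real.sqrt 5) / 2)) ^ (n * (j + 1))|) ∧
    (Nat.fib (n + 1) : ℝ) / (Nat.fib n : ℝ) =
      (1 + Real.sqrt 5) / 2 + Real.sqrt 5 *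
        ∑' j : ℕ, ((1 - (1 + Real.sqrt 5) / 2) / ((1 + Real.sqrt 5) / 2)) ^ (n * (j + 1)) := by
  rw [← goldenRatio.eq_1, one_sub_goldenConj]
  simp only [pow_mul]
  have hr : ‖(ψ / φ) ^ n‖ < 1 := by
    rw [norm_pow]
    exact pow_lt_one₀ (norm_nonneg _) abs_goldenConj_div_goldenRatio_lt_one (by omega)
  have hsum := hasSum_pow_succ_of_norm_lt_one hr
  exact ⟨hsum.summable.abs, by rw [fib_succ_div_fib (by omega), hsum.tsum_eq]⟩
end
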